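/- The map TD : T_n × T_n → ℕ defined by TD(T₁,T₂) = (1/2)·d_trans(π(T₁), π(T₂)) is a metric on the set T_n of phylogenetic trees with n leaves labeled 1,…,n, taking values in {0, 1, …, n−2}. -/

import Mathlib

open Equiv Finset
open scoped Classical

/-- A phylogenetic tree with `n` leaves labeled `1,…,n`: a rooted tree (every node is
reached from the root by iterating the parent map) with no outdegree-1 nodes, whose
leaves are injectively labeled by `1,…,n`. -/
structure PhyloTree (n : ℕ) where
  /-- number of nodes -/
  numNodes : ℕ
  numNodes_pos : 0 < numNodes
  /-- the parent map (the root is its own parent); the arcs of the tree are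
  (parent v, v) for v ≠ root -/
  parent : Fin numNodes → Fin numNodes
  root : Fin numNodes
  parent_root : parent root = root
  /-- every node is reachable from the root: iterating `parent` reaches the root -/
  reach_root : ∀ v, ∃ k, parent^[k] v = root
  /-- no node has outdegree 1 -/
  no_outdegree_one : ∀ v,
    (Finset.univ.filter fun w => parent w = v ∧ w ≠ root).card ≠ 1
  /-- the labeling of the nodes; only its values on leaves matter -/
  labelOf : Fin numNodes → ℕ
  /-- the leaves (nodes without children) are labeled bijectively by `1,…,n` -/
  label_bij : Set.BijOn labelOf
    {v | (Finset.univ.filter fun w => parent w = v ∧ w ≠ root) = ∅} (Set.Icc 1 n)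

namespace PhyloTree

variable {n : ℕ} (T : PhyloTree n)

/-- The children of a node. -/
def children (v : Fin T.numNodes) : Finset (Fin T.numNodes) :=
  Finset.univ.filter fun w => T.parent w = v ∧ w ≠ T.root

/-- A leaf is a node without children. -/
def IsLeaf (v : Fin T.numNodes) : Prop := T.children v = ∅

/-- The internal nodes of `T`. -/
noncomputable def internals : Finset (Fin T.numNodes) :=
  Finset.univ.filter fun v => ¬ T.IsLeaf v

/-- The height of a node: the length of a longest directed path from it to a leaf. -/
noncomputable def height (v : Fin T.numNodes) : ℕ :=
  sSup {k | ∃ f : Fin (k + 1) → Fin T.numNodes, f 0 = v ∧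
    (∀ i : Fin k, f i.succ ∈ T.children (f i.castSucc)) ∧ T.IsLeaf (f (Fin.last k))}

/-- The smallest `ℓ`-label of a child of `v`. -/
noncomputable def minChildLabel (ℓ : Fin T.numNodes → ℕ) (v : Fin T.numNodes) : ℕ :=
  sInf (ℓ '' (T.children v : Set (Fin T.numNodes)))

/-- `ℓ` is the bottom-up ordering of `T`: an injective map `V → {1,…,|V|}` that
(a) extends the leaf labels, (b) is increasing with height, and (c) for internal nodes
of equal height, is increasing with the minimum label of their children. -/
noncomputable def IsBUO (ℓ : Fin T.numNodes → ℕ) : Prop :=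
  Function.Injective ℓ ∧ (∀ v, ℓ v ∈ Set.Icc 1 T.numNodes) ∧
  (∀ v, T.IsLeaf v → ℓ v = T.labelOf v) ∧
  (∀ u v, T.height u < T.height v → ℓ u < ℓ v) ∧
  (∀ u v, 0 < T.height u → T.height u = T.height v →
    T.minChildLabel ℓ u < T.minChildLabel ℓ v → ℓ u < ℓ v)

/-- The matching representation of `T` (relative to its bottom-up ordering `ℓ`):
the family of the sets `ℓ(children(u))` over the internal nodes `u`. -/
noncomputable def matchRep (ℓ : Fin T.numNodes → ℕ) : Finset (Finset ℕ) :=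
  T.internals.image fun u => (T.children u).image ℓ

/-- The cycle `κ(S) = (i₁, i₂, …, i_k)` associated to a set `S = {i₁ < ⋯ < i_k}`
(the identity if `S` is a singleton or empty). -/
def kappa (S : Finset ℕ) : Equiv.Perm ℕ := (S.sort (· ≤ ·)).formPerm

/-- The matching permutation of `T` (relative to its bottom-up ordering `ℓ`): the
product of the cycles associated to the members of the matching representation; it
fixes every number not in `{1,…,|V|−1}` (in particular it lies in `S_{2n−2}`). -/
noncomputable def matchPerm (ℓ : Fin T.numNodes → ℕ) : Equiv.Perm ℕ :=
  ((T.internals.sort (· ≤ ·)).map fun u => kappa ((T.children u).image ℓ)).prod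

end PhyloTree

/-- A label-preserving isomorphism of phylogenetic trees: a bijection of the nodes
preserving the root, the arcs, and the leaf labels. -/
def PhyloIso {n : ℕ} (T₁ T₂ : PhyloTree n) : Prop :=
  ∃ e : Fin T₁.numNodes ≃ Fin T₂.numNodes,
    e T₁.root = T₂.root ∧
    (∀ v, e (T₁.parent v) = T₂.parent (e v)) ∧
    (∀ v, T₁.IsLeaf v → T₂.labelOf (e v) = T₁.labelOf v)

/-- The least number of transpositions whose product equals `σ`. -/
noncomputable def minSwaps {α : Type*} [DecidableEq α] (σ : Equiv.Perm α) : ℕ :=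
  sInf {k | ∃ l : List (Equiv.Perm α), (∀ τ ∈ l, τ.IsSwap) ∧ l.prod = σ ∧ l.length = k}

/-- `dTrans π₁ π₂` is the least number of transpositions needed to express `π₂⁻¹ * π₁`. -/
noncomputable def dTrans {α : Type*} [DecidableEq α] (π₁ π₂ : Equiv.Perm α) : ℕ :=
  minSwaps (π₂⁻¹ * π₁)

/-- The transposition distance TD(T₁,T₂) = ½·d_trans(π(T₁),π(T₂)). -/
noncomputable def TD {n : ℕ} (T₁ T₂ : PhyloTree n)
    (ℓ₁ : Fin T₁.numNodes → ℕ) (ℓ₂ : Fin T₂.numNodes → ℕ) : ℕ :=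
  dTrans (T₁.matchPerm ℓ₁) (T₂.matchPerm ℓ₂) / 2

namespace TDAux

open Equiv Equiv.Perm

lemma prod_apply_eq_self {l : List (Perm ℕ)} {x : ℕ} (h : ∀ τ ∈ l, τ x = x) :
    l.prod x = x := by
  induction l with
  | nil => rfl
  | cons a t ih =>
    have : t.prod x = x := ih fun τ hτ => h τ (List.mem_cons_of_mem _ hτ)
    simp [List.prod_cons, Equiv.Perm.mul_apply, this, h a (List.mem_cons_self)]

lemma exists_pts (l : List (Perm ℕ)) (hl : ∀ τ ∈ l, τ.IsSwap) :
    ∃ s : Finset ℕ, ∀ τ ∈ l, ∀ x : ℕ, τ x ≠ x → x ∈ s := by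
  induction l with
  | nil => exact ⟨∅, by simp⟩
  | cons a t ih =>
    obtain ⟨s, hs⟩ := ih fun τ hτ => hl τ (List.mem_cons_of_mem _ hτ)
    obtain ⟨u, v, huv, rfl⟩ := hl a (List.mem_cons_self)
    refine ⟨insert u (insert v s), ?_⟩
    intro τ hτ x hx
    rcases List.mem_cons.1 hτ with rfl | hτ
    · rcases eq_or_ne x u with rfl | hxu
      · simp
      rcases eq_or_ne x v with rfl | hxv
      · simp
      · exact absurd (Equiv.swap_apply_of_ne_of_ne hxu hxv) hx
    · exact Finset.mem_insert_of_mem (Finset.mem_insert_of_mem (hs τ hτ x hx))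

lemma mem_iff_of_fix {s : Finset ℕ} {σ : Perm ℕ} (h : ∀ x ∉ s, σ x = x) :
    ∀ x : ℕ, x ∈ s ↔ σ x ∈ s := by
  intro x
  constructor
  · intro hx
    by_contra hσ
    have h1 : σ (σ x) = σ x := h _ hσ
    have := σ.injective h1
    rw [this] at hσ; exact hσ hx
  · intro hσ
    by_contra hx
    rw [h x hx] at hσ; exact hx hσ

lemma sign_subtypePerm_prod (s : Finset ℕ) (l : List (Perm ℕ))
    (hswap : ∀ τ ∈ l, τ.IsSwap) (hsup : ∀ τ ∈ l, ∀ x : ℕ, τ x ≠ x → x ∈ s) :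
    ∀ h : ∀ x : ℕ, x ∈ s ↔ l.prod x ∈ s,
      Equiv.Perm.sign ((l.prod).subtypePerm (p := fun x => x ∈ s) (fun x => (h x).symm)) = (-1) ^ l.length := by
  induction l with
  | nil =>
    intro h
    have : (List.prod ([] : List (Perm ℕ))).subtypePerm (fun x => (h x).symm) = 1 := by
      ext x; simp [Equiv.Perm.subtypePerm_apply]
    rw [this]; simp
  | cons a t ih =>
    intro h
    have hfa : ∀ x ∉ s, a x = x := by
      intro x hx; by_contra hax
      exact hx (hsup a (List.mem_cons_self) x hax)
    have hft : ∀ x ∉ s, t.prod x = x := by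
      intro x hx
      exact prod_apply_eq_self fun τ hτ => by
        by_contra hne; exact hx (hsup τ (List.mem_cons_of_mem _ hτ) x hne)
    have ha := mem_iff_of_fix hfa
    have ht := mem_iff_of_fix hft
    have hmul : (List.prod (a :: t)).subtypePerm (fun x => (h x).symm) =
        a.subtypePerm (fun x => (ha x).symm) * (t.prod).subtypePerm (fun x => (ht x).symm) := by
      rw [Equiv.Perm.subtypePerm_mul]
      ext ⟨x, hx⟩
      simp [Equiv.Perm.subtypePerm_apply, List.prod_cons]
      rfl
    rw [hmul, map_mul]
    have hts := ih (fun τ hτ => hswap τ (List.mem_cons_of_mem _ hτ))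
      (fun τ hτ => hsup τ (List.mem_cons_of_mem _ hτ)) ht
    rw [hts]
    obtain ⟨u, v, huv, rfl⟩ := hswap a (List.mem_cons_self)
    have hu : u ∈ s := hsup _ (List.mem_cons_self) u
      (by rw [Equiv.swap_apply_left]; exact huv.symm)
    have hv : v ∈ s := hsup _ (List.mem_cons_self) v
      (by rw [Equiv.swap_apply_right]; exact huv)
    have hsub : (Equiv.swap u v).subtypePerm (fun x => (ha x).symm) =
        Equiv.swap (⟨u, hu⟩ : {x : ℕ // x ∈ s}) ⟨v, hv⟩ := by
      ext ⟨x, hx⟩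
      simp only [Equiv.Perm.subtypePerm_apply]
      rcases eq_or_ne x u with rfl | hxu
      · simp [Equiv.swap_apply_left]
      rcases eq_or_ne x v with rfl | hxv
      · simp [Equiv.swap_apply_right]
      · rw [Equiv.swap_apply_of_ne_of_ne hxu hxv,
          Equiv.swap_apply_of_ne_of_ne (by simp [hxu]) (by simp [hxv])]
    rw [hsub, Equiv.Perm.sign_swap (by simp [huv])]
    simp [pow_succ, mul_comm]

lemma length_parity_of_prod_eq {l₁ l₂ : List (Perm ℕ)}
    (h₁ : ∀ τ ∈ l₁, τ.IsSwap) (h₂ : ∀ τ ∈ l₂, τ.IsSwap)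
    (h : l₁.prod = l₂.prod) : l₁.length % 2 = l₂.length % 2 := by
  obtain ⟨s, hs⟩ := exists_pts (l₁ ++ l₂) (by
    intro τ hτ; rcases List.mem_append.1 hτ with h' | h'
    exacts [h₁ τ h', h₂ τ h'])
  have hs₁ : ∀ τ ∈ l₁, ∀ x : ℕ, τ x ≠ x → x ∈ s := fun τ hτ =>
    hs τ (List.mem_append.2 (Or.inl hτ))
  have hs₂ : ∀ τ ∈ l₂, ∀ x : ℕ, τ x ≠ x → x ∈ s := fun τ hτ =>
    hs τ (List.mem_append.2 (Or.inr hτ))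
  have hf₁ : ∀ x ∉ s, l₁.prod x = x := fun x hx =>
    prod_apply_eq_self fun τ hτ => by
      by_contra hne; exact hx (hs₁ τ hτ x hne)
  have hm₁ := mem_iff_of_fix hf₁
  have e₁ := sign_subtypePerm_prod s l₁ h₁ hs₁ hm₁
  have hm₂ : ∀ x : ℕ, x ∈ s ↔ l₂.prod x ∈ s := by rw [← h]; exact hm₁
  have e₂ := sign_subtypePerm_prod s l₂ h₂ hs₂ hm₂
  have heq : l₁.prod.subtypePerm (fun x => (hm₁ x).symm) = l₂.prod.subtypePerm (fun x => (hm₂ x).symm) := by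
    ext x; simp [Equiv.Perm.subtypePerm_apply, h]
  have : ((-1 : ℤˣ)) ^ l₁.length = (-1) ^ l₂.length := by
    rw [← e₁, ← e₂, heq]
  have h2 : (l₁.length % 2 = 0 ∧ l₂.length % 2 = 0) ∨
      (l₁.length % 2 = 1 ∧ l₂.length % 2 = 1) := by
    rcases Nat.even_or_odd l₁.length with hE1 | hO1 <;>
      rcases Nat.even_or_odd l₂.length with hE2 | hO2
    · exact Or.inl ⟨Nat.even_iff.1 hE1, Nat.even_iff.1 hE2⟩
    · exfalso; rw [hE1.neg_one_pow, hO2.neg_one_pow] at this; exact absurd this (by decide)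
    · exfalso; rw [hO1.neg_one_pow, hE2.neg_one_pow] at this; exact absurd this (by decide)
    · exact Or.inr ⟨Nat.odd_iff.1 hO1, Nat.odd_iff.1 hO2⟩
  omega

/-- The set of lengths of swap words for `σ`. -/
def SwapWords (σ : Perm ℕ) : Set ℕ :=
  {k | ∃ l : List (Equiv.Perm ℕ), (∀ τ ∈ l, τ.IsSwap) ∧ l.prod = σ ∧ l.length = k}

lemma minSwaps_eq_sInf (σ : Perm ℕ) : minSwaps σ = sInf (SwapWords σ) := rfl

lemma minSwaps_le {σ : Perm ℕ} {l : List (Perm ℕ)} (hl : ∀ τ ∈ l, τ.IsSwap)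
    (hp : l.prod = σ) : minSwaps σ ≤ l.length :=
  Nat.sInf_le ⟨l, hl, hp, rfl⟩

lemma minSwaps_mem {σ : Perm ℕ} (hne : (SwapWords σ).Nonempty) :
    minSwaps σ ∈ SwapWords σ := Nat.sInf_mem hne

lemma minSwaps_parity {σ : Perm ℕ} {l : List (Perm ℕ)} (hl : ∀ τ ∈ l, τ.IsSwap)
    (hp : l.prod = σ) : minSwaps σ % 2 = l.length % 2 := by
  obtain ⟨l₀, h₀s, h₀p, h₀len⟩ := minSwaps_mem ⟨l.length, l, hl, hp, rfl⟩
  rw [← h₀len]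
  exact length_parity_of_prod_eq h₀s hl (h₀p.trans hp.symm)

lemma minSwaps_inv (σ : Perm ℕ) : minSwaps σ⁻¹ = minSwaps σ := by
  have key : ∀ τ : Perm ℕ, SwapWords τ⁻¹ ⊆ SwapWords τ → True := fun _ _ => trivial
  have hsub : ∀ τ : Perm ℕ, SwapWords τ ⊆ SwapWords τ⁻¹ := by
    rintro τ k ⟨l, hl, hp, hlen⟩
    refine ⟨(l.map (fun x => x⁻¹)).reverse, ?_, ?_, by simp [hlen]⟩
    · intro τ' hτ'
      simp only [List.mem_reverse, List.mem_map] at hτ'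
      obtain ⟨τ'', hτ'', rfl⟩ := hτ'
      obtain ⟨u, v, huv, rfl⟩ := hl τ'' hτ''
      exact ⟨u, v, huv, by simp⟩
    · rw [← List.prod_inv_reverse, hp]
  have h1 := hsub σ
  have h2 := hsub σ⁻¹
  rw [inv_inv] at h2
  have : SwapWords σ = SwapWords σ⁻¹ := le_antisymm h1 h2
  rw [minSwaps_eq_sInf, minSwaps_eq_sInf, this]

lemma minSwaps_triangle {σ τ : Perm ℕ} (hσ : (SwapWords σ).Nonempty)
    (hτ : (SwapWords τ).Nonempty) :
    minSwaps (σ * τ) ≤ minSwaps σ + minSwaps τ := by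
  obtain ⟨l₁, h₁, p₁, len₁⟩ := minSwaps_mem hσ
  obtain ⟨l₂, h₂, p₂, len₂⟩ := minSwaps_mem hτ
  calc minSwaps (σ * τ) ≤ (l₁ ++ l₂).length := by
        refine minSwaps_le ?_ (by rw [List.prod_append, p₁, p₂])
        intro τ' hτ'; rcases List.mem_append.1 hτ' with h | h
        exacts [h₁ τ' h, h₂ τ' h]
    _ = minSwaps σ + minSwaps τ := by simp [len₁, len₂]

lemma minSwaps_eq_zero_iff {σ : Perm ℕ} (hne : (SwapWords σ).Nonempty) :
    minSwaps σ = 0 ↔ σ = 1 := by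
  constructor
  · intro h0
    obtain ⟨l, hl, hp, hlen⟩ := minSwaps_mem hne
    rw [h0, List.length_eq_zero_iff] at hlen
    rw [← hp, hlen, List.prod_nil]
  · intro h1
    have : minSwaps σ ≤ ([] : List (Perm ℕ)).length :=
      minSwaps_le (by simp) (by simp [h1])
    simpa using this

lemma exists_swaps_of_support (s : Finset ℕ) :
    ∀ σ : Perm ℕ, (∀ x : ℕ, σ x ≠ x → x ∈ s) → σ ≠ 1 →
      ∃ l : List (Perm ℕ), (∀ τ ∈ l, τ.IsSwap) ∧ l.prod = σ ∧ l.length + 1 ≤ s.card := by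
  induction s using Finset.strongInduction with
  | _ s ih =>
    intro σ hsupp hσ
    have : ∃ a : ℕ, σ a ≠ a := by
      by_contra hno
      push_neg at hno
      exact hσ (Equiv.ext fun x => hno x)
    obtain ⟨a, ha⟩ := this
    have haS : a ∈ s := hsupp a ha
    have hb : σ (σ a) ≠ σ a := fun h => ha (σ.injective h)
    have hbS : σ a ∈ s := hsupp _ hb
    set σ' : Perm ℕ := Equiv.swap a (σ a) * σ with hσ'def
    have hσ'a : σ' a = a := by simp [hσ'def, Equiv.Perm.mul_apply, Equiv.swap_apply_right]
    have hsupp' : ∀ x : ℕ, σ' x ≠ x → x ∈ s.erase a := by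
      intro x hx
      rcases eq_or_ne x a with rfl | hxa
      · exact absurd hσ'a hx
      refine Finset.mem_erase.2 ⟨hxa, ?_⟩
      by_contra hxs
      have h1 : σ x = x := by
        by_contra h; exact hxs (hsupp x h)
      have : σ' x = x := by
        rw [hσ'def]
        simp only [Equiv.Perm.mul_apply, h1]
        exact Equiv.swap_apply_of_ne_of_ne hxa (fun h => hxs (h ▸ hbS))
      exact hx this
    rcases eq_or_ne σ' 1 with h1 | h1
    · have hσeq : σ = Equiv.swap a (σ a) := by
        have h2 : σ = Equiv.swap a (σ a) * σ' := by
          rw [hσ'def, ← mul_assoc, Equiv.swap_mul_self, one_mul]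
        rw [h1, mul_one] at h2; exact h2
      refine ⟨[Equiv.swap a (σ a)],
        by intro τ hτ; rw [List.mem_singleton] at hτ; subst hτ; exact ⟨a, σ a, Ne.symm ha, rfl⟩,
        by rw [List.prod_singleton]; exact hσeq.symm, ?_⟩
      have h2 : ({a, σ a} : Finset ℕ) ⊆ s := by
        intro x hx; rcases Finset.mem_insert.1 hx with rfl | hx
        · exact haS
        · simpa using (Finset.mem_singleton.1 hx ▸ hbS)
      have := Finset.card_le_card h2
      rw [Finset.card_insert_of_notMem (by simp [Ne.symm ha]), Finset.card_singleton] at this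
      simpa using this
    · obtain ⟨l', hl', hp', hlen'⟩ := ih (s.erase a) (Finset.erase_ssubset haS) σ' hsupp' h1
      refine ⟨Equiv.swap a (σ a) :: l', ?_, ?_, ?_⟩
      · intro τ hτ
        rcases List.mem_cons.1 hτ with rfl | hτ
        exacts [⟨a, σ a, Ne.symm ha, rfl⟩, hl' τ hτ]
      · rw [List.prod_cons, hp', hσ'def, ← mul_assoc, Equiv.swap_mul_self, one_mul]
      · have hc := Finset.card_erase_of_mem haS
        have : 1 ≤ s.card := Finset.card_pos.2 ⟨a, haS⟩
        simp only [List.length_cons]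
        omega

end TDAux

namespace PhyloTree

variable {n : ℕ} (T : PhyloTree n)

lemma mem_children {w v : Fin T.numNodes} :
    w ∈ T.children v ↔ T.parent w = v ∧ w ≠ T.root := by
  unfold children
  rw [Finset.mem_filter]
  simp

lemma children_disjoint {u v : Fin T.numNodes} (h : u ≠ v) :
    Disjoint (T.children u) (T.children v) := by
  rw [Finset.disjoint_left]
  intro w hwu hwv
  rw [mem_children] at hwu hwv
  exact h (hwu.1 ▸ hwv.1 ▸ rfl)

lemma mem_internals {v : Fin T.numNodes} : v ∈ T.internals ↔ ¬ T.IsLeaf v := by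
  unfold internals
  rw [Finset.mem_filter]
  simp

lemma children_nonempty {v : Fin T.numNodes} (h : v ∈ T.internals) :
    (T.children v).Nonempty := by
  rw [mem_internals] at h
  exact Finset.nonempty_iff_ne_empty.2 h

lemma two_le_card_children {v : Fin T.numNodes} (h : v ∈ T.internals) :
    2 ≤ (T.children v).card := by
  have h1 := T.no_outdegree_one v
  have h2 : (T.children v).card ≠ 1 := h1
  have h3 : (T.children v).card ≠ 0 := by
    rw [Finset.card_ne_zero]
    exact children_nonempty T h
  omega

lemma parent_mem_internals {w : Fin T.numNodes} (hw : w ≠ T.root) :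
    T.parent w ∈ T.internals := by
  rw [mem_internals]
  intro hleaf
  have : w ∈ T.children (T.parent w) := (mem_children T).2 ⟨rfl, hw⟩
  rw [IsLeaf] at hleaf
  rw [hleaf] at this
  exact absurd this (Finset.notMem_empty w)

/-- The depth of a node: number of steps to reach the root. -/
noncomputable def depth (v : Fin T.numNodes) : ℕ := Nat.find (T.reach_root v)

lemma parent_iterate_depth (v : Fin T.numNodes) :
    T.parent^[T.depth v] v = T.root := Nat.find_spec (T.reach_root v)

lemma depth_root : T.depth T.root = 0 := by
  rw [depth, Nat.find_eq_zero]
  rfl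

lemma eq_root_of_depth_eq_zero {v : Fin T.numNodes} (h : T.depth v = 0) : v = T.root := by
  have := parent_iterate_depth T v
  rwa [h, Function.iterate_zero_apply] at this

lemma depth_child {w v : Fin T.numNodes} (h : w ∈ T.children v) :
    T.depth w = T.depth v + 1 := by
  rw [mem_children] at h
  obtain ⟨hp, hw⟩ := h
  have hub : T.parent^[T.depth v + 1] w = T.root := by
    rw [Function.iterate_succ_apply, hp]
    exact parent_iterate_depth T v
  have h1 : T.depth w ≤ T.depth v + 1 := Nat.find_le hub
  have h2 : T.depth w ≠ 0 := fun h0 => hw (eq_root_of_depth_eq_zero T h0)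
  have h3 : T.depth v + 1 ≤ T.depth w := by
    by_contra hlt
    push_neg at hlt
    have he : T.parent^[T.depth w] w = T.root := parent_iterate_depth T w
    have : T.parent^[T.depth w - 1] v = T.root := by
      have : T.parent^[T.depth w - 1 + 1] w = T.root := by
        rwa [Nat.sub_add_cancel (Nat.one_le_iff_ne_zero.2 h2)]
      rwa [Function.iterate_succ_apply, hp] at this
    have h5 : T.depth v ≤ T.depth w - 1 := Nat.find_le this
    omega
  omega

lemma depth_lt_numNodes (v : Fin T.numNodes) : T.depth v + 1 ≤ T.numNodes := by
  set d := T.depth v with hd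
  have hinj : ∀ i j : ℕ, i < j → j ≤ d → T.parent^[i] v ≠ T.parent^[j] v := by
    intro i j hij hjd heq
    have : T.parent^[(d - j) + i] v = T.root := by
      have h1 : T.parent^[d - j] (T.parent^[j] v) = T.root := by
        rw [← Function.iterate_add_apply]
        have : d - j + j = d := Nat.sub_add_cancel hjd
        rw [this]
        exact parent_iterate_depth T v
      rw [← heq] at h1
      rwa [← Function.iterate_add_apply] at h1
    have hle : T.depth v ≤ d - j + i := Nat.find_le this
    rw [← hd] at hle
    omega
  have hfinj : Function.Injective (fun i : Fin (d + 1) => T.parent^[(i : ℕ)] v) := by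
    intro i j hij
    by_contra hne
    rcases lt_or_gt_of_ne (fun h : (i : ℕ) = (j : ℕ) => hne (Fin.ext h)) with h | h
    · exact hinj i j h (Nat.lt_succ_iff.1 j.isLt) hij
    · exact hinj j i h (Nat.lt_succ_iff.1 i.isLt) hij.symm
  have := Fintype.card_le_of_injective _ hfinj
  simpa using this

/-- The set of lengths of descending paths from `v` to a leaf. -/
def heightSet (v : Fin T.numNodes) : Set ℕ :=
  {k | ∃ f : Fin (k + 1) → Fin T.numNodes, f 0 = v ∧
    (∀ i : Fin k, f i.succ ∈ T.children (f i.castSucc)) ∧ T.IsLeaf (f (Fin.last k))}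

lemma height_eq_sSup (v : Fin T.numNodes) : T.height v = sSup (T.heightSet v) := rfl

lemma depth_path {k : ℕ} {f : Fin (k + 1) → Fin T.numNodes}
    (hstep : ∀ i : Fin k, f i.succ ∈ T.children (f i.castSucc)) :
    ∀ m : ℕ, ∀ hm : m < k + 1, T.depth (f ⟨m, hm⟩) = T.depth (f 0) + m := by
  intro m
  induction m with
  | zero => intro hm; rfl
  | succ p ih =>
    intro hm
    have hp : p < k + 1 := by omega
    have hpk : p < k := by omega
    have hstep' := hstep ⟨p, hpk⟩
    have h1 : (⟨p, hpk⟩ : Fin k).succ = ⟨p + 1, hm⟩ := rfl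
    have h2 : (⟨p, hpk⟩ : Fin k).castSucc = ⟨p, hp⟩ := rfl
    rw [h1, h2] at hstep'
    rw [depth_child T hstep', ih hp]
    omega

lemma heightSet_bddAbove (v : Fin T.numNodes) : BddAbove (T.heightSet v) := by
  refine ⟨T.numNodes, ?_⟩
  rintro k ⟨f, h0, hstep, hlast⟩
  have := depth_path T hstep k (by omega)
  have h2 := depth_lt_numNodes T (f ⟨k, by omega⟩)
  omega

lemma leaf_mem_heightSet {v : Fin T.numNodes} (h : T.IsLeaf v) : 0 ∈ T.heightSet v :=
  ⟨fun _ => v, rfl, fun i => i.elim0, h⟩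

lemma prepend_heightSet {v w : Fin T.numNodes} (hw : w ∈ T.children v) {k : ℕ}
    (hk : k ∈ T.heightSet w) : k + 1 ∈ T.heightSet v := by
  obtain ⟨f, h0, hstep, hlast⟩ := hk
  refine ⟨(Fin.cons v f : Fin (k + 1 + 1) → Fin T.numNodes), Fin.cons_zero _ _, ?_, ?_⟩
  · intro i
    induction i using Fin.cases with
    | zero =>
      rw [Fin.castSucc_zero, Fin.cons_zero, Fin.cons_succ, h0]
      exact hw
    | succ j =>
      rw [← Fin.succ_castSucc, Fin.cons_succ, Fin.cons_succ]
      exact hstep j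
  · rw [← Fin.succ_last, Fin.cons_succ]
    exact hlast

lemma heightSet_nonempty (v : Fin T.numNodes) : (T.heightSet v).Nonempty := by
  have main : ∀ m : ℕ, ∀ v : Fin T.numNodes, T.numNodes - T.depth v ≤ m →
      (T.heightSet v).Nonempty := by
    intro m
    induction m with
    | zero =>
      intro v hv
      have := depth_lt_numNodes T v
      omega
    | succ p ih =>
      intro v hv
      by_cases hleaf : T.IsLeaf v
      · exact ⟨0, leaf_mem_heightSet T hleaf⟩
      · have hint : v ∈ T.internals := (mem_internals T).2 hleaf
        obtain ⟨w, hw⟩ := children_nonempty T hint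
        have hdw : T.depth w = T.depth v + 1 := depth_child T hw
        have hw' : T.numNodes - T.depth w ≤ p := by
          have := depth_lt_numNodes T w
          omega
        obtain ⟨k, hk⟩ := ih w hw'
        exact ⟨k + 1, prepend_heightSet T hw hk⟩
  exact main (T.numNodes - T.depth v) v le_rfl

lemma height_mem (v : Fin T.numNodes) : T.height v ∈ T.heightSet v :=
  Nat.sSup_mem (heightSet_nonempty T v) (heightSet_bddAbove T v)

lemma le_height {v : Fin T.numNodes} {k : ℕ} (h : k ∈ T.heightSet v) : k ≤ T.height v :=
  le_csSup (heightSet_bddAbove T v) h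

lemma height_leaf {v : Fin T.numNodes} (h : T.IsLeaf v) : T.height v = 0 := by
  have h1 : ∀ k ∈ T.heightSet v, k ≤ 0 := by
    rintro k ⟨f, h0, hstep, hlast⟩
    by_contra hk
    have hk1 : 0 < k := by omega
    have := hstep ⟨0, hk1⟩
    have h2 : (⟨0, hk1⟩ : Fin k).castSucc = 0 := rfl
    rw [h2, h0] at this
    rw [IsLeaf] at h
    rw [h] at this
    exact absurd this (Finset.notMem_empty _)
  have h2 := csSup_le (heightSet_nonempty T v) h1
  rw [height_eq_sSup]
  omega

lemma height_child_lt {v w : Fin T.numNodes} (hw : w ∈ T.children v) :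
    T.height w < T.height v := by
  have h1 : T.height w + 1 ∈ T.heightSet v :=
    prepend_heightSet T hw (height_mem T w)
  have := le_height T h1
  omega

lemma height_pos_of_internal {v : Fin T.numNodes} (h : v ∈ T.internals) :
    0 < T.height v := by
  obtain ⟨w, hw⟩ := children_nonempty T h
  have := height_child_lt T hw
  omega

lemma mem_heightSet_le_one_add_max {v : Fin T.numNodes} (h : v ∈ T.internals) {k : ℕ}
    (hk : k ∈ T.heightSet v) :
    k ≤ 1 + ((T.children v).image T.height).max' ((children_nonempty T h).image _) := by
  set M := ((T.children v).image T.height).max' ((children_nonempty T h).image _) with hM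
  obtain ⟨f, h0, hstep, hlast⟩ := hk
  rcases k with _ | k'
  · exfalso
    have : T.IsLeaf v := by
      have := hlast
      rw [show Fin.last 0 = (0 : Fin 1) from rfl, h0] at this
      exact this
    exact (mem_internals T).1 h this
  · have hmem : k' ∈ T.heightSet (f ((0 : Fin (k' + 1)).succ)) := by
      refine ⟨fun i => f i.succ, rfl, ?_, ?_⟩
      · intro i
        have := hstep i.succ
        rwa [← Fin.succ_castSucc] at this
      · show T.IsLeaf (f (Fin.last k').succ)
        rw [Fin.succ_last]
        exact hlast
    have hch : f ((0 : Fin (k' + 1)).succ) ∈ T.children v := by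
      have := hstep 0
      rwa [Fin.castSucc_zero, h0] at this
    have h1 : T.height (f ((0 : Fin (k' + 1)).succ)) ≤ M :=
      Finset.le_max' _ _ (Finset.mem_image_of_mem _ hch)
    have h2 := le_height T hmem
    omega

lemma height_eq_one_add_max {v : Fin T.numNodes} (h : v ∈ T.internals) :
    T.height v = 1 + ((T.children v).image T.height).max'
      ((children_nonempty T h).image _) := by
  have hub := mem_heightSet_le_one_add_max T h (height_mem T v)
  have hlb : 1 + ((T.children v).image T.height).max' ((children_nonempty T h).image _)
      ≤ T.height v := by
    obtain ⟨w, hwmem, hwh⟩ := Finset.mem_image.1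
      (Finset.max'_mem _ ((children_nonempty T h).image T.height))
    have := height_child_lt T hwmem
    omega
  omega

lemma height_add_depth_le (v : Fin T.numNodes) :
    T.height v + T.depth v ≤ T.height T.root := by
  have main : ∀ d : ℕ, ∀ v : Fin T.numNodes, T.depth v = d →
      T.height v + T.depth v ≤ T.height T.root := by
    intro d
    induction d using Nat.strong_induction_on with
    | _ d ih =>
      intro v hv
      rcases Nat.eq_zero_or_pos d with rfl | hd
      · rw [eq_root_of_depth_eq_zero T hv]
        simp [depth_root]
      · have hvr : v ≠ T.root := by
          intro h
          rw [h, depth_root] at hv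
          omega
        have hch : v ∈ T.children (T.parent v) := (mem_children T).2 ⟨rfl, hvr⟩
        have hdp : T.depth v = T.depth (T.parent v) + 1 := depth_child T hch
        have hht := height_child_lt T hch
        have := ih (T.depth (T.parent v)) (by omega) (T.parent v) rfl
        omega
  exact main (T.depth v) v rfl

lemma height_lt_root {v : Fin T.numNodes} (h : v ≠ T.root) :
    T.height v < T.height T.root := by
  have h1 := height_add_depth_le T v
  have h2 : T.depth v ≠ 0 := fun h0 => h (eq_root_of_depth_eq_zero T h0)
  omega

end PhyloTree
namespace PhyloTree

variable {n : ℕ} {T : PhyloTree n} {ℓ : Fin T.numNodes → ℕ}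

/-- The leaves of `T` as a finset. -/
noncomputable def leaves (T : PhyloTree n) : Finset (Fin T.numNodes) :=
  Finset.univ.filter fun v => T.IsLeaf v

lemma mem_leaves {v : Fin T.numNodes} : v ∈ T.leaves ↔ T.IsLeaf v := by
  unfold leaves
  rw [Finset.mem_filter]
  simp

lemma leafSet_eq : {v | (Finset.univ.filter fun w =>
    T.parent w = v ∧ w ≠ T.root) = ∅} = (T.leaves : Set (Fin T.numNodes)) := by
  ext v
  simp only [Set.mem_setOf_eq, Finset.coe_filter, Finset.mem_coe, mem_leaves]
  rfl

section BUO

variable (hℓ : T.IsBUO ℓ)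
include hℓ

lemma buo_inj : Function.Injective ℓ := hℓ.1

lemma buo_mem (v : Fin T.numNodes) : 1 ≤ ℓ v ∧ ℓ v ≤ T.numNodes := hℓ.2.1 v

lemma buo_leaf {v : Fin T.numNodes} (h : T.IsLeaf v) : ℓ v = T.labelOf v := hℓ.2.2.1 v h

lemma buo_mono {u v : Fin T.numNodes} (h : T.height u < T.height v) : ℓ u < ℓ v :=
  hℓ.2.2.2.1 u v h

lemma buo_min {u v : Fin T.numNodes} (h0 : 0 < T.height u) (h1 : T.height u = T.height v)
    (h2 : T.minChildLabel ℓ u < T.minChildLabel ℓ v) : ℓ u < ℓ v :=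
  hℓ.2.2.2.2 u v h0 h1 h2

lemma buo_surj {j : ℕ} (h1 : 1 ≤ j) (h2 : j ≤ T.numNodes) : ∃ v, ℓ v = j := by
  have himg : Finset.univ.image ℓ = Finset.Icc 1 T.numNodes := by
    apply Finset.eq_of_subset_of_card_le
    · intro x hx
      obtain ⟨v, _, rfl⟩ := Finset.mem_image.1 hx
      exact Finset.mem_Icc.2 (buo_mem hℓ v)
    · rw [Finset.card_image_of_injective _ (buo_inj hℓ), Nat.card_Icc]
      simp
  have : j ∈ Finset.univ.image ℓ := by
    rw [himg]
    exact Finset.mem_Icc.2 ⟨h1, h2⟩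
  obtain ⟨v, _, hv⟩ := Finset.mem_image.1 this
  exact ⟨v, hv⟩

lemma buo_child_lt {v w : Fin T.numNodes} (hw : w ∈ T.children v) : ℓ w < ℓ v :=
  buo_mono hℓ (height_child_lt T hw)

lemma buo_root : ℓ T.root = T.numNodes := by
  have hN : 1 ≤ T.numNodes := T.numNodes_pos
  obtain ⟨v, hv⟩ := buo_surj hℓ hN le_rfl
  rcases eq_or_ne v T.root with rfl | hvr
  · exact hv
  · exfalso
    have h1 : ℓ v < ℓ T.root := buo_mono hℓ (height_lt_root T hvr)
    have h2 := (buo_mem hℓ T.root).2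
    omega

lemma buo_lt_of_ne_root {v : Fin T.numNodes} (h : v ≠ T.root) :
    ℓ v ≤ T.numNodes - 1 := by
  have h1 : ℓ v < ℓ T.root := buo_mono hℓ (height_lt_root T h)
  rw [buo_root hℓ] at h1
  omega

lemma buo_leaf_mem {v : Fin T.numNodes} (h : T.IsLeaf v) : 1 ≤ ℓ v ∧ ℓ v ≤ n := by
  have h1 : T.labelOf v ∈ Set.Icc 1 n := by
    apply T.label_bij.mapsTo
    rw [leafSet_eq]
    exact (mem_leaves (T := T)).2 h
  rw [buo_leaf hℓ h]
  exact h1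

lemma exists_leaf : ∃ v : Fin T.numNodes, T.IsLeaf v := by
  obtain ⟨k, f, h0, hstep, hlast⟩ := heightSet_nonempty T
    (⟨0, T.numNodes_pos⟩ : Fin T.numNodes)
  exact ⟨f (Fin.last k), hlast⟩

lemma n_pos : 1 ≤ n := by
  obtain ⟨v, hv⟩ := exists_leaf (T := T) (ℓ := ℓ) hℓ
  have := buo_leaf_mem hℓ hv
  omega

lemma exists_leaf_label {j : ℕ} (h1 : 1 ≤ j) (h2 : j ≤ n) :
    ∃ v, T.IsLeaf v ∧ ℓ v = j := by
  have : j ∈ Set.Icc 1 n := ⟨h1, h2⟩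
  obtain ⟨v, hv, hvj⟩ := T.label_bij.surjOn this
  rw [leafSet_eq] at hv
  have hleaf : T.IsLeaf v := (mem_leaves (T := T)).1 hv
  exact ⟨v, hleaf, by rw [buo_leaf hℓ hleaf]; exact hvj⟩

lemma buo_internal_gt {v : Fin T.numNodes} (h : v ∈ T.internals) : n < ℓ v := by
  obtain ⟨w, hw, hwj⟩ := exists_leaf_label hℓ (n_pos hℓ) le_rfl
  have h1 : T.height w < T.height v := by
    rw [height_leaf T hw]
    exact height_pos_of_internal T h
  have := buo_mono hℓ h1
  omega

lemma buo_leaf_of_le {v : Fin T.numNodes} (h : ℓ v ≤ n) : T.IsLeaf v := by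
  by_contra hleaf
  have := buo_internal_gt hℓ ((mem_internals T).2 hleaf)
  omega

lemma minChildLabel_eq_min' {v : Fin T.numNodes} (h : v ∈ T.internals) :
    T.minChildLabel ℓ v = ((T.children v).image ℓ).min'
      ((children_nonempty T h).image _) := by
  rw [minChildLabel, ← Finset.coe_image]
  exact Finset.Nonempty.csInf_eq_min' _

lemma childLabels_disjoint {u v : Fin T.numNodes} (h : u ≠ v) :
    Disjoint ((T.children u).image ℓ) ((T.children v).image ℓ) := by
  rw [Finset.disjoint_left]
  rintro x hxu hxv
  obtain ⟨a, ha, rfl⟩ := Finset.mem_image.1 hxu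
  obtain ⟨b, hb, hba⟩ := Finset.mem_image.1 hxv
  have : b = a := buo_inj hℓ hba
  subst this
  exact (Finset.disjoint_left.1 (children_disjoint T h) ha) hb

/-- lexicographic comparison of (height, minChildLabel) keys -/
def KeyLt (a b : ℕ × ℕ) : Prop := a.1 < b.1 ∨ (a.1 = b.1 ∧ a.2 < b.2)

omit hℓ in
lemma keyLt_asymm {a b : ℕ × ℕ} (h1 : KeyLt a b) (h2 : KeyLt b a) : False := by
  rcases h1 with h1 | ⟨h1, h1'⟩ <;> rcases h2 with h2 | ⟨h2, h2'⟩ <;> omega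

lemma buo_key_lt {u v : Fin T.numNodes} (hu : u ∈ T.internals) (hv : v ∈ T.internals)
    (h : ℓ u < ℓ v) :
    KeyLt (T.height u, T.minChildLabel ℓ u) (T.height v, T.minChildLabel ℓ v) := by
  have hne : u ≠ v := fun he => by rw [he] at h; omega
  have hminne : T.minChildLabel ℓ u ≠ T.minChildLabel ℓ v := by
    rw [minChildLabel_eq_min' hℓ hu, minChildLabel_eq_min' hℓ hv]
    intro he
    have h1 := Finset.min'_mem ((T.children u).image ℓ) ((children_nonempty T hu).image _)
    have h2 := Finset.min'_mem ((T.children v).image ℓ) ((children_nonempty T hv).image _)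
    rw [he] at h1
    exact Finset.disjoint_left.1 (childLabels_disjoint hℓ hne) h1 h2
  rcases lt_trichotomy (T.height u) (T.height v) with hh | hh | hh
  · exact Or.inl hh
  · rcases lt_trichotomy (T.minChildLabel ℓ u) (T.minChildLabel ℓ v) with hm | hm | hm
    · exact Or.inr ⟨hh, hm⟩
    · exact absurd hm hminne
    · exfalso
      have := buo_min hℓ (by rw [← hh]; exact height_pos_of_internal T hu) hh.symm hm
      omega
  · exfalso
    have := buo_mono hℓ hh
    omega

end BUO

end PhyloTree
namespace PhyloTree

open TDAux

lemma sum_map_sort {α M : Type*} [AddCommMonoid M] (r : α → α → Prop) [DecidableEq α]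
    [DecidableRel r] [IsTrans α r] [IsAntisymm α r] [IsTotal α r]
    (s : Finset α) (g : α → M) : ((s.sort r).map g).sum = ∑ u ∈ s, g u := by
  have h1 : ((s.sort r).map g : Multiset M) = Multiset.map g s.val := by
    rw [← Finset.sort_eq s r, Multiset.map_coe]
  rw [Finset.sum, ← h1]
  simp

variable {n : ℕ} {T : PhyloTree n} {ℓ : Fin T.numNodes → ℕ}

lemma biUnion_children_eq :
    T.internals.biUnion T.children = Finset.univ.erase T.root := by
  ext w
  simp only [Finset.mem_biUnion, Finset.mem_erase, Finset.mem_univ, and_true]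
  constructor
  · rintro ⟨u, hu, hw⟩
    exact ((mem_children T).1 hw).2
  · intro hw
    exact ⟨T.parent w, parent_mem_internals T hw, (mem_children T).2 ⟨rfl, hw⟩⟩

lemma sum_card_children :
    ∑ u ∈ T.internals, (T.children u).card = T.numNodes - 1 := by
  rw [← Finset.card_biUnion (fun u hu v hv huv => children_disjoint T huv),
    biUnion_children_eq]
  rw [Finset.card_erase_of_mem (Finset.mem_univ _)]
  simp

lemma card_leaves : T.leaves.card = n := by
  have hinj : Set.InjOn T.labelOf ↑T.leaves := by
    rw [← leafSet_eq]; exact T.label_bij.injOn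
  have himg : T.leaves.image T.labelOf = Finset.Icc 1 n := by
    apply Finset.Subset.antisymm
    · intro x hx
      obtain ⟨v, hv, rfl⟩ := Finset.mem_image.1 hx
      have : T.labelOf v ∈ Set.Icc 1 n := by
        apply T.label_bij.mapsTo
        rw [leafSet_eq]
        exact hv
      exact Finset.mem_Icc.2 this
    · intro j hj
      have : (j : ℕ) ∈ Set.Icc 1 n := Finset.mem_Icc.1 hj
      obtain ⟨v, hv, hvj⟩ := T.label_bij.surjOn this
      rw [leafSet_eq] at hv
      exact Finset.mem_image.2 ⟨v, hv, hvj⟩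
  have := Finset.card_image_of_injOn hinj
  rw [himg, Nat.card_Icc] at this
  omega

lemma internals_card_add : T.internals.card + n = T.numNodes := by
  have h := Finset.card_filter_add_card_filter_not
    (s := (Finset.univ : Finset (Fin T.numNodes))) (fun v => T.IsLeaf v)
  have h1 : T.leaves.card = n := card_leaves
  have h2 : (Finset.univ.filter fun v => T.IsLeaf v) = T.leaves := rfl
  have h3 : (Finset.univ.filter fun v => ¬ T.IsLeaf v) = T.internals := rfl
  rw [h2, h3, h1] at h
  simpa [add_comm] using h

lemma internals_card_le : T.internals.card + 1 ≤ n := by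
  have h1 : T.internals.card • 2 ≤ ∑ u ∈ T.internals, (T.children u).card :=
    Finset.card_nsmul_le_sum _ _ _ fun u hu => two_le_card_children T hu
  have h2 := sum_card_children (T := T)
  have h3 := internals_card_add (T := T)
  have h4 := T.numNodes_pos
  simp only [smul_eq_mul] at h1
  omega

lemma numNodes_le : T.numNodes ≤ 2 * n - 1 := by
  have h3 := internals_card_add (T := T)
  have := internals_card_le (T := T)
  omega

section BUO

variable (hℓ : T.IsBUO ℓ)
include hℓ

lemma card_childLabels {u : Fin T.numNodes} :
    ((T.children u).image ℓ).card = (T.children u).card :=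
  Finset.card_image_of_injective _ (buo_inj hℓ)

lemma mem_childLabels_bounds {u : Fin T.numNodes} {x : ℕ}
    (hx : x ∈ (T.children u).image ℓ) : 1 ≤ x ∧ x ≤ T.numNodes - 1 := by
  obtain ⟨w, hw, rfl⟩ := Finset.mem_image.1 hx
  have h1 := (buo_mem hℓ w).1
  have h2 := buo_lt_of_ne_root hℓ ((mem_children T).1 hw).2
  exact ⟨h1, h2⟩

omit hℓ in
lemma kappa_apply_of_not_mem {S : Finset ℕ} {x : ℕ} (hx : x ∉ S) : kappa S x = x :=
  List.formPerm_apply_of_notMem (by rwa [Finset.mem_sort])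

omit hℓ in
lemma kappa_apply_mem {S : Finset ℕ} {x : ℕ} (hx : x ∈ S) : kappa S x ∈ S := by
  have := List.formPerm_apply_mem_of_mem (l := S.sort (· ≤ ·)) (x := x)
    (by rwa [Finset.mem_sort])
  rwa [Finset.mem_sort] at this

omit hℓ in
lemma kappa_apply_ne {S : Finset ℕ} {x : ℕ} (h2 : 2 ≤ S.card) (hx : x ∈ S) :
    kappa S x ≠ x := by
  rw [kappa]
  rw [List.formPerm_apply_mem_ne_self_iff _ (Finset.sort_nodup _ _) x
    (by rwa [Finset.mem_sort])]
  rwa [Finset.length_sort]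

lemma matchPerm_apply_of_forall_not_mem {x : ℕ}
    (h : ∀ u ∈ T.internals, x ∉ (T.children u).image ℓ) : T.matchPerm ℓ x = x := by
  apply TDAux.prod_apply_eq_self
  intro τ hτ
  obtain ⟨u, hu, rfl⟩ := List.mem_map.1 hτ
  exact kappa_apply_of_not_mem (h u (Finset.mem_sort (α := Fin T.numNodes) (· ≤ ·) |>.1 hu))

lemma exists_mem_of_moved {x : ℕ} (h : T.matchPerm ℓ x ≠ x) :
    ∃ u ∈ T.internals, x ∈ (T.children u).image ℓ := by
  by_contra hno
  push_neg at hno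
  exact h (matchPerm_apply_of_forall_not_mem hℓ hno)

lemma moved_bounds {x : ℕ} (h : T.matchPerm ℓ x ≠ x) :
    1 ≤ x ∧ x ≤ T.numNodes - 1 := by
  obtain ⟨u, hu, hx⟩ := exists_mem_of_moved hℓ h
  exact mem_childLabels_bounds hℓ hx

lemma matchPerm_eq_kappa_on {u₀ : Fin T.numNodes} (hu₀ : u₀ ∈ T.internals) {x : ℕ}
    (hx : x ∈ (T.children u₀).image ℓ) :
    T.matchPerm ℓ x = kappa ((T.children u₀).image ℓ) x := by
  set S := (T.children u₀).image ℓ with hS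
  set l := T.internals.sort (· ≤ ·) with hl
  have hmem : u₀ ∈ l := Finset.mem_sort (· ≤ ·) |>.2 hu₀
  obtain ⟨l₁, l₂, hsplit⟩ := List.append_of_mem hmem
  have hnd : l.Nodup := Finset.sort_nodup _ _
  rw [hsplit] at hnd
  have hnd1 := List.nodup_append.1 hnd
  have hu₀l₁ : u₀ ∉ l₁ := fun h => hnd1.2.2 u₀ h u₀ List.mem_cons_self rfl
  have hu₀l₂ : u₀ ∉ l₂ := fun h => (List.nodup_cons.1 hnd1.2.1).1 h
  have hfix : ∀ u : Fin T.numNodes, u ∈ l → u ≠ u₀ →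
      kappa ((T.children u).image ℓ) x = x := by
    intro u hu hne
    apply kappa_apply_of_not_mem
    intro hmem'
    exact Finset.disjoint_left.1 (childLabels_disjoint hℓ hne) hmem' hx
  have hfix2 : ∀ y ∈ S, ∀ u : Fin T.numNodes, u ∈ l → u ≠ u₀ →
      kappa ((T.children u).image ℓ) y = y := by
    intro y hy u hu hne
    apply kappa_apply_of_not_mem
    intro hmem'
    exact Finset.disjoint_left.1 (childLabels_disjoint hℓ hne) hmem' hy
  have hprodfix : ∀ (t : List (Fin T.numNodes)), (∀ u ∈ t, u ∈ l ∧ u ≠ u₀) →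
      ∀ y ∈ S, ((t.map fun u => kappa ((T.children u).image ℓ)).prod) y = y := by
    intro t ht y hy
    apply TDAux.prod_apply_eq_self
    intro τ hτ
    obtain ⟨u, hu, rfl⟩ := List.mem_map.1 hτ
    exact hfix2 y hy u (ht u hu).1 (ht u hu).2
  have hmm : T.matchPerm ℓ = ((l₁.map fun u => kappa ((T.children u).image ℓ)).prod) *
      (kappa S * ((l₂.map fun u => kappa ((T.children u).image ℓ)).prod)) := by
    rw [matchPerm, ← hl, hsplit]
    rw [List.map_append, List.prod_append, List.map_cons, List.prod_cons]
  rw [hmm]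
  have h2 : ((l₂.map fun u => kappa ((T.children u).image ℓ)).prod) x = x := by
    apply hprodfix
    · intro u hu
      exact ⟨by rw [hsplit]; simp [hu], fun he => hu₀l₂ (he ▸ hu)⟩
    · exact hx
  simp only [Equiv.Perm.mul_apply, h2]
  have h3 : kappa S x ∈ S := kappa_apply_mem hx
  apply hprodfix
  · intro u hu
    exact ⟨by rw [hsplit]; simp [hu], fun he => hu₀l₁ (he ▸ hu)⟩
  · exact h3

lemma matchPerm_iterate {u₀ : Fin T.numNodes} (hu₀ : u₀ ∈ T.internals) {x : ℕ}
    (hx : x ∈ (T.children u₀).image ℓ) (k : ℕ) :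
    (T.matchPerm ℓ)^[k] x = (kappa ((T.children u₀).image ℓ))^[k] x ∧
      (kappa ((T.children u₀).image ℓ))^[k] x ∈ (T.children u₀).image ℓ := by
  induction k with
  | zero => exact ⟨rfl, hx⟩
  | succ p ih =>
    obtain ⟨h1, h2⟩ := ih
    constructor
    · rw [Function.iterate_succ_apply', Function.iterate_succ_apply', h1,
        matchPerm_eq_kappa_on hℓ hu₀ h2]
    · rw [Function.iterate_succ_apply']
      exact kappa_apply_mem h2

lemma orbit_eq {u₀ : Fin T.numNodes} (hu₀ : u₀ ∈ T.internals) {x : ℕ}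
    (hx : x ∈ (T.children u₀).image ℓ) (y : ℕ) :
    (∃ k, (T.matchPerm ℓ)^[k] x = y) ↔ y ∈ (T.children u₀).image ℓ := by
  set S := (T.children u₀).image ℓ with hS
  constructor
  · rintro ⟨k, rfl⟩
    rw [(matchPerm_iterate hℓ hu₀ hx k).1]
    exact (matchPerm_iterate hℓ hu₀ hx k).2
  · intro hy
    set ls := S.sort (· ≤ ·) with hls
    have hnodup : ls.Nodup := Finset.sort_nodup _ _
    have hx' : x ∈ ls := by rw [hls]; rw [Finset.mem_sort]; exact hx
    have hy' : y ∈ ls := by rw [hls]; rw [Finset.mem_sort]; exact hy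
    obtain ⟨i, hi, hix⟩ := List.mem_iff_getElem.1 hx'
    obtain ⟨j, hj, hjy⟩ := List.mem_iff_getElem.1 hy'
    refine ⟨ls.length - i + j, ?_⟩
    rw [(matchPerm_iterate hℓ hu₀ hx _).1]
    have hkap : kappa S = ls.formPerm := rfl
    rw [Equiv.Perm.iterate_eq_pow, hkap, ← hix]
    rw [List.formPerm_pow_apply_getElem ls hnodup _ i hi]
    have hmod : (i + (ls.length - i + j)) % ls.length = j := by
      have h1 : i + (ls.length - i + j) = ls.length + j := by omega
      rw [h1, Nat.add_mod_left, Nat.mod_eq_of_lt hj]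
    simp only [hmod]
    exact hjy

lemma exists_moved {u₀ : Fin T.numNodes} (hu₀ : u₀ ∈ T.internals) :
    ∃ x ∈ (T.children u₀).image ℓ, T.matchPerm ℓ x ≠ x := by
  have hcard : 2 ≤ ((T.children u₀).image ℓ).card := by
    rw [card_childLabels hℓ]
    exact two_le_card_children T hu₀
  obtain ⟨x, hx⟩ := Finset.card_pos.1 (by omega : 0 < ((T.children u₀).image ℓ).card)
  refine ⟨x, hx, ?_⟩
  rw [matchPerm_eq_kappa_on hℓ hu₀ hx]
  exact kappa_apply_ne hcard hx

omit hℓ in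
lemma mem_matchRep {S : Finset ℕ} :
    S ∈ T.matchRep ℓ ↔ ∃ u ∈ T.internals, (T.children u).image ℓ = S :=
  Finset.mem_image

end BUO

section Swaps

lemma zipWith_swap_facts : ∀ (l : List ℕ), l.Nodup →
    ∀ τ ∈ List.zipWith Equiv.swap l l.tail, τ.IsSwap := by
  intro l
  induction l with
  | nil => intro _ τ hτ; simp at hτ
  | cons a t ih =>
    intro hnd τ hτ
    match t, hτ with
    | [], hτ => simp at hτ
    | b :: t', hτ =>
      rw [List.tail_cons, List.zipWith_cons_cons] at hτ
      rcases List.mem_cons.1 hτ with rfl | hτ'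
      · exact ⟨a, b, by rintro rfl; exact (List.nodup_cons.1 hnd).1 (List.mem_cons_self), rfl⟩
      · exact ih (List.nodup_cons.1 hnd).2 τ hτ'

variable (hℓ : T.IsBUO ℓ)
include hℓ

lemma matchPerm_swapWord : (n - 1) ∈ TDAux.SwapWords (T.matchPerm ℓ) := by
  classical
  set f : Fin T.numNodes → List (Equiv.Perm ℕ) := fun u =>
    List.zipWith Equiv.swap (((T.children u).image ℓ).sort (· ≤ ·))
      ((((T.children u).image ℓ).sort (· ≤ ·)).tail) with hf
  refine ⟨((T.internals.sort (· ≤ ·)).map f).flatten, ?_, ?_, ?_⟩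
  · intro τ hτ
    rw [List.mem_flatten] at hτ
    obtain ⟨L, hL, hτL⟩ := hτ
    obtain ⟨u, hu, rfl⟩ := List.mem_map.1 hL
    exact zipWith_swap_facts _ (Finset.sort_nodup _ _) τ hτL
  · rw [List.prod_flatten, List.map_map]
    rfl
  · rw [List.length_flatten, List.map_map]
    have hlen : ∀ u : Fin T.numNodes, (List.length ∘ f) u = (T.children u).card - 1 := by
      intro u
      simp only [Function.comp_apply, hf, List.length_zipWith, List.length_tail,
        Finset.length_sort]
      rw [card_childLabels hℓ]
      omega
    have h1 : ((T.internals.sort (· ≤ ·)).map (List.length ∘ f)).sum =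
        ∑ u ∈ T.internals, ((T.children u).card - 1) := by
      rw [sum_map_sort]
      exact Finset.sum_congr rfl fun u _ => hlen u
    rw [h1]
    have h2 : ∑ u ∈ T.internals, ((T.children u).card - 1) + T.internals.card =
        ∑ u ∈ T.internals, (T.children u).card := by
      rw [Finset.card_eq_sum_ones T.internals, ← Finset.sum_add_distrib]
      apply Finset.sum_congr rfl
      intro u hu
      have := two_le_card_children T hu
      omega
    have h3 := sum_card_children (T := T)
    have h4 := internals_card_add (T := T)
    have h5 := T.numNodes_pos
    omega

end Swaps

end PhyloTree
namespace PhyloTree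

variable {n : ℕ}

lemma mem_of_kappa_ne {S : Finset ℕ} {x : ℕ} (h : kappa S x ≠ x) : x ∈ S := by
  have h' : x ∈ {y | (S.sort (· ≤ ·)).formPerm y ≠ y} := h
  have := List.support_formPerm_le' (S.sort (· ≤ ·)) h'
  rw [Finset.mem_coe, Finset.sort_toFinset] at this
  exact this

lemma matchRep_subset {T₁ T₂ : PhyloTree n} {ℓ₁ : Fin T₁.numNodes → ℕ}
    {ℓ₂ : Fin T₂.numNodes → ℕ} (h₁ : T₁.IsBUO ℓ₁) (h₂ : T₂.IsBUO ℓ₂)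
    (hπ : T₁.matchPerm ℓ₁ = T₂.matchPerm ℓ₂) : T₁.matchRep ℓ₁ ⊆ T₂.matchRep ℓ₂ := by
  intro S hS
  obtain ⟨u, hu, rfl⟩ := (mem_matchRep (T := T₁)).1 hS
  obtain ⟨x, hx, hmoved⟩ := exists_moved h₁ hu
  have hmoved₂ : T₂.matchPerm ℓ₂ x ≠ x := by rwa [← hπ]
  obtain ⟨u₂, hu₂, hx₂⟩ := exists_mem_of_moved h₂ hmoved₂
  have hsets : (T₁.children u).image ℓ₁ = (T₂.children u₂).image ℓ₂ := by
    ext y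
    rw [← orbit_eq h₁ hu hx y, ← orbit_eq h₂ hu₂ hx₂ y, hπ]
  rw [hsets]
  exact (mem_matchRep (T := T₂)).2 ⟨u₂, hu₂, rfl⟩

lemma matchRep_eq_of_matchPerm_eq {T₁ T₂ : PhyloTree n} {ℓ₁ : Fin T₁.numNodes → ℕ}
    {ℓ₂ : Fin T₂.numNodes → ℕ} (h₁ : T₁.IsBUO ℓ₁) (h₂ : T₂.IsBUO ℓ₂)
    (hπ : T₁.matchPerm ℓ₁ = T₂.matchPerm ℓ₂) : T₁.matchRep ℓ₁ = T₂.matchRep ℓ₂ :=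
  Finset.Subset.antisymm (matchRep_subset h₁ h₂ hπ) (matchRep_subset h₂ h₁ hπ.symm)

lemma buo_unique {T : PhyloTree n} {ℓ ℓ' : Fin T.numNodes → ℕ}
    (hℓ : T.IsBUO ℓ) (hℓ' : T.IsBUO ℓ') : ℓ = ℓ' := by
  have main : ∀ k : ℕ, ∀ v, ℓ v = k → ℓ' v = k := by
    intro k
    induction k using Nat.strong_induction_on with
    | _ k ih =>
      intro v hv
      have hkN : k ≤ T.numNodes := hv ▸ (buo_mem hℓ v).2
      have hk1 : 1 ≤ k := hv ▸ (buo_mem hℓ v).1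
      have hA : ∀ w, ℓ' w < k → ℓ w < k := by
        intro w hw
        by_contra hge
        push_neg at hge
        have hi1 : 1 ≤ ℓ' w := (buo_mem hℓ' w).1
        obtain ⟨w₀, hw₀⟩ := buo_surj hℓ hi1 (by omega : ℓ' w ≤ T.numNodes)
        have h1 : ℓ' w₀ = ℓ' w := ih (ℓ' w) hw w₀ hw₀
        have h2 : w₀ = w := buo_inj hℓ' h1
        rw [h2] at hw₀
        omega
      by_cases hkn : k ≤ n
      · have hleaf : T.IsLeaf v := buo_leaf_of_le hℓ (by omega)
        rw [buo_leaf hℓ' hleaf, ← buo_leaf hℓ hleaf, hv]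
      · push_neg at hkn
        have hvint : v ∈ T.internals := by
          rw [mem_internals]
          intro hle
          have := (buo_leaf_mem hℓ hle).2
          omega
        obtain ⟨v', hv'⟩ := buo_surj hℓ' hk1 hkN
        rcases eq_or_ne v' v with rfl | hne
        · exact hv'
        exfalso
        have hv'int : v' ∈ T.internals := by
          rw [mem_internals]
          intro hle
          have := (buo_leaf_mem hℓ' hle).2
          omega
        have h1 : k < ℓ v' := by
          rcases lt_trichotomy (ℓ v') k with h | h | h
          · have := ih _ h v' rfl
            omega
          · exact absurd (buo_inj hℓ (by rw [h, hv])) hne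
          · exact h
        have h2 : k < ℓ' v := by
          rcases lt_trichotomy (ℓ' v) k with h | h | h
          · have := hA v h
            omega
          · exact absurd (buo_inj hℓ' (by rw [h, hv'])) hne.symm
          · exact h
        have hminv : T.minChildLabel ℓ' v = T.minChildLabel ℓ v := by
          unfold minChildLabel
          congr 1
          apply Set.image_congr
          intro w hw
          rw [Finset.mem_coe] at hw
          have hwl : ℓ w < k := by
            have := buo_child_lt hℓ hw
            omega
          exact ih (ℓ w) hwl w rfl
        have hminv' : T.minChildLabel ℓ' v' = T.minChildLabel ℓ v' := by
          unfold minChildLabel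
          congr 1
          apply Set.image_congr
          intro w hw
          rw [Finset.mem_coe] at hw
          have hwl' : ℓ' w < k := by
            have := buo_child_lt hℓ' hw
            omega
          have hwl : ℓ w < k := hA w hwl'
          exact ih (ℓ w) hwl w rfl
        have hK1 : KeyLt (T.height v, T.minChildLabel ℓ v) (T.height v', T.minChildLabel ℓ v') :=
          buo_key_lt hℓ hvint hv'int (by omega)
        have hK2 : KeyLt (T.height v', T.minChildLabel ℓ' v') (T.height v, T.minChildLabel ℓ' v) :=
          buo_key_lt hℓ' hv'int hvint (by omega)
        rw [hminv, hminv'] at hK2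
        exact keyLt_asymm hK1 hK2
  funext v
  exact (main (ℓ v) v rfl).symm

end PhyloTree
namespace PhyloTree

variable {n : ℕ}

section Iso

variable {T₁ T₂ : PhyloTree n} (e : Fin T₁.numNodes ≃ Fin T₂.numNodes)
  (hroot : e T₁.root = T₂.root)
  (hparent : ∀ v, e (T₁.parent v) = T₂.parent (e v))

include hroot hparent

lemma iso_children (v : Fin T₁.numNodes) :
    T₂.children (e v) = (T₁.children v).image e := by
  ext w'
  rw [Finset.mem_image]
  constructor
  · intro hw'
    refine ⟨e.symm w', ?_, by simp⟩
    rw [mem_children] at hw' ⊢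
    obtain ⟨hp, hr⟩ := hw'
    constructor
    · apply e.injective
      rw [hparent, e.apply_symm_apply, hp]
    · intro h
      apply hr
      rw [← e.apply_symm_apply w', h, hroot]
  · rintro ⟨w, hw, rfl⟩
    rw [mem_children] at hw ⊢
    obtain ⟨hp, hr⟩ := hw
    constructor
    · rw [← hparent, hp]
    · intro h
      exact hr (e.injective (h.trans hroot.symm))

lemma iso_leaf {v : Fin T₁.numNodes} : T₂.IsLeaf (e v) ↔ T₁.IsLeaf v := by
  unfold IsLeaf
  rw [iso_children e hroot hparent, Finset.image_eq_empty]

lemma iso_heightSet (v : Fin T₁.numNodes) {k : ℕ} (hk : k ∈ T₁.heightSet v) :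
    k ∈ T₂.heightSet (e v) := by
  obtain ⟨f, h0, hstep, hlast⟩ := hk
  refine ⟨fun i => e (f i), show e (f 0) = e v by rw [h0], ?_, ?_⟩
  · intro i
    rw [iso_children e hroot hparent, Finset.mem_image]
    exact ⟨f i.succ, hstep i, rfl⟩
  · rw [iso_leaf e hroot hparent]
    exact hlast

lemma iso_height (v : Fin T₁.numNodes) : T₂.height (e v) = T₁.height v := by
  have h1 : T₁.heightSet v = T₂.heightSet (e v) := by
    apply Set.Subset.antisymm
    · intro k hk
      exact iso_heightSet e hroot hparent v hk
    · intro k hk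
      have h2 := iso_heightSet e.symm (by rw [← hroot]; simp)
        (by intro w; apply e.injective; rw [hparent]; simp) (e v) hk
      simpa using h2
  rw [height_eq_sSup, height_eq_sSup, h1]

lemma iso_internals : T₂.internals = T₁.internals.map e.toEmbedding := by
  ext u
  rw [Finset.mem_map]
  constructor
  · intro hu
    refine ⟨e.symm u, ?_, by simp⟩
    rw [mem_internals] at hu ⊢
    intro hleaf
    apply hu
    have := (iso_leaf e hroot hparent (v := e.symm u)).2 hleaf
    simpa using this
  · rintro ⟨u', hu', rfl⟩
    rw [mem_internals] at hu' ⊢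
    intro hleaf
    exact hu' ((iso_leaf e hroot hparent).1 hleaf)

variable {ℓ₂ : Fin T₂.numNodes → ℕ}
  (hlabel : ∀ v, T₁.IsLeaf v → T₂.labelOf (e v) = T₁.labelOf v)
  (h₂ : T₂.IsBUO ℓ₂)

include hlabel h₂

lemma iso_isBUO : T₁.IsBUO (fun v => ℓ₂ (e v)) := by
  obtain ⟨hinj, hmem, hleaf, hmono, hmin⟩ := h₂
  refine ⟨?_, ?_, ?_, ?_, ?_⟩
  · intro u v huv
    exact e.injective (hinj huv)
  · intro v
    have h1 := hmem (e v)
    have h2 : T₁.numNodes = T₂.numNodes := by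
      have hc : Fintype.card (Fin T₁.numNodes) = Fintype.card (Fin T₂.numNodes) :=
        Fintype.card_congr e
      simpa using hc
    have h3 := Set.mem_Icc.1 h1
    show ℓ₂ (e v) ∈ Set.Icc 1 T₁.numNodes
    exact Set.mem_Icc.2 ⟨h3.1, by omega⟩
  · intro v hv
    show ℓ₂ (e v) = T₁.labelOf v
    rw [hleaf (e v) ((iso_leaf e hroot hparent).2 hv)]
    exact hlabel v hv
  · intro u v huv
    show ℓ₂ (e u) < ℓ₂ (e v)
    exact hmono (e u) (e v)
      (by rw [iso_height e hroot hparent, iso_height e hroot hparent]; exact huv)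
  · intro u v h0 hh hm
    show ℓ₂ (e u) < ℓ₂ (e v)
    have hmc : ∀ w, T₁.minChildLabel (fun v => ℓ₂ (e v)) w = T₂.minChildLabel ℓ₂ (e w) := by
      intro w
      unfold minChildLabel
      congr 1
      rw [iso_children e hroot hparent, Finset.coe_image, Set.image_image]
    apply hmin (e u) (e v)
    · rwa [iso_height e hroot hparent]
    · rw [iso_height e hroot hparent, iso_height e hroot hparent]; exact hh
    · rwa [hmc, hmc] at hm

lemma iso_matchPerm {ℓ₁ : Fin T₁.numNodes → ℕ} (h₁ : T₁.IsBUO ℓ₁) :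
    T₁.matchPerm ℓ₁ = T₂.matchPerm ℓ₂ := by
  have hbuo : T₁.IsBUO (fun v => ℓ₂ (e v)) := iso_isBUO e hroot hparent hlabel h₂
  have hℓeq : ℓ₁ = fun v => ℓ₂ (e v) := buo_unique h₁ hbuo
  subst hℓeq
  -- now prove matchPerm equality
  set f₂ : Fin T₂.numNodes → Equiv.Perm ℕ := fun u => kappa ((T₂.children u).image ℓ₂) with hf₂
  have hkey : ∀ u : Fin T₁.numNodes,
      kappa ((T₁.children u).image fun v => ℓ₂ (e v)) = f₂ (e u) := by
    intro u
    rw [hf₂]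
    congr 1
    rw [iso_children e hroot hparent, Finset.image_image]
    rfl
  have hl1 : ((T₁.internals.sort (· ≤ ·)).map fun u =>
      kappa ((T₁.children u).image fun v => ℓ₂ (e v))).prod =
      (((T₁.internals.sort (· ≤ ·)).map (e : Fin T₁.numNodes → Fin T₂.numNodes)).map f₂).prod := by
    rw [List.map_map]
    congr 1
    apply List.map_congr_left
    intro u hu
    exact hkey u
  rw [matchPerm, matchPerm, hl1]
  -- list permutation argument
  have hperm : ((T₁.internals.sort (· ≤ ·)).map (e : Fin T₁.numNodes → Fin T₂.numNodes)).Perm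
      (T₂.internals.sort (· ≤ ·)) := by
    rw [← Multiset.coe_eq_coe]
    have h1 : (((T₁.internals.sort (· ≤ ·)).map (e : Fin T₁.numNodes → Fin T₂.numNodes) :
        List (Fin T₂.numNodes)) : Multiset (Fin T₂.numNodes)) =
        Multiset.map e (T₁.internals.sort (· ≤ ·) : Multiset (Fin T₁.numNodes)) := by
      rw [Multiset.map_coe]
    rw [h1, Finset.sort_eq, Finset.sort_eq, iso_internals e hroot hparent, Finset.map_val]
    rfl
  have hpairwise : (((T₁.internals.sort (· ≤ ·)).map
      (e : Fin T₁.numNodes → Fin T₂.numNodes)).map f₂).Pairwise Commute := by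
    rw [List.pairwise_map]
    have hnd : ((T₁.internals.sort (· ≤ ·)).map
        (e : Fin T₁.numNodes → Fin T₂.numNodes)).Nodup :=
      (Finset.sort_nodup _ _).map (fun a b hab => e.injective hab)
    have hmem : ∀ u ∈ (T₁.internals.sort (· ≤ ·)).map
        (e : Fin T₁.numNodes → Fin T₂.numNodes), u ∈ T₂.internals := by
      intro u hu
      obtain ⟨u', hu', rfl⟩ := List.mem_map.1 hu
      rw [iso_internals e hroot hparent, Finset.mem_map]
      exact ⟨u', Finset.mem_sort (· ≤ ·) |>.1 hu', rfl⟩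
    have hne : ((T₁.internals.sort (· ≤ ·)).map
        (e : Fin T₁.numNodes → Fin T₂.numNodes)).Pairwise (· ≠ ·) := hnd
    apply List.Pairwise.imp_of_mem ?_ hne
    intro a b ha hb hab
    apply Equiv.Perm.Disjoint.commute
    intro x
    by_contra hx
    push_neg at hx
    obtain ⟨hxa, hxb⟩ := hx
    have hma : x ∈ (T₂.children a).image ℓ₂ := mem_of_kappa_ne hxa
    have hmb : x ∈ (T₂.children b).image ℓ₂ := mem_of_kappa_ne hxb
    exact Finset.disjoint_left.1 (childLabels_disjoint h₂ hab) hma hmb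
  exact List.Perm.prod_eq' (hperm.map f₂) hpairwise

end Iso

end PhyloTree
namespace PhyloTree

variable {n : ℕ}

/-- a (noncomputable) inverse of the labeling -/
noncomputable def invL (T : PhyloTree n) (ℓ : Fin T.numNodes → ℕ) : ℕ → Fin T.numNodes :=
  @Function.invFun _ _ ⟨⟨0, T.numNodes_pos⟩⟩ ℓ

/-- the children label set of the node with label `j` -/
noncomputable def lam (T : PhyloTree n) (ℓ : Fin T.numNodes → ℕ) (j : ℕ) : Finset ℕ :=
  (T.children (T.invL ℓ j)).image ℓ

/-- the height of the node with label `j` -/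
noncomputable def hlab (T : PhyloTree n) (ℓ : Fin T.numNodes → ℕ) (j : ℕ) : ℕ :=
  T.height (T.invL ℓ j)

/-- the key of a child-label set, relative to a height function on labels -/
noncomputable def skey (hfun : ℕ → ℕ) (S : Finset ℕ) : ℕ × ℕ :=
  (1 + sSup ((S.image hfun : Finset ℕ) : Set ℕ), sInf (S : Set ℕ))

lemma skey_congr {hfun hfun' : ℕ → ℕ} {S : Finset ℕ} (h : S.image hfun = S.image hfun') :
    skey hfun S = skey hfun' S := by
  unfold skey
  rw [h]

variable {T : PhyloTree n} {ℓ : Fin T.numNodes → ℕ}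

lemma n_le_numNodes : n ≤ T.numNodes := by
  have := internals_card_add (T := T)
  omega

section BUO
variable (hℓ : T.IsBUO ℓ)
include hℓ

lemma invL_label (v : Fin T.numNodes) : T.invL ℓ (ℓ v) = v :=
  @Function.leftInverse_invFun _ _ ⟨⟨0, T.numNodes_pos⟩⟩ _ (buo_inj hℓ) v

lemma label_invL {j : ℕ} (h1 : 1 ≤ j) (h2 : j ≤ T.numNodes) : ℓ (T.invL ℓ j) = j := by
  obtain ⟨v, hv⟩ := buo_surj hℓ h1 h2
  exact @Function.invFun_eq _ _ ⟨⟨0, T.numNodes_pos⟩⟩ _ _ ⟨v, hv⟩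

lemma invL_internal {j : ℕ} (h1 : n < j) (h2 : j ≤ T.numNodes) :
    T.invL ℓ j ∈ T.internals := by
  rw [mem_internals]
  intro hleaf
  have := (buo_leaf_mem hℓ hleaf).2
  rw [label_invL hℓ (by omega) h2] at this
  omega

lemma invL_leaf {j : ℕ} (h1 : 1 ≤ j) (h2 : j ≤ n) : T.IsLeaf (T.invL ℓ j) := by
  apply buo_leaf_of_le hℓ
  rw [label_invL hℓ h1 (le_trans h2 n_le_numNodes)]
  exact h2

lemma lam_leaf {j : ℕ} (h1 : 1 ≤ j) (h2 : j ≤ n) : T.lam ℓ j = ∅ := by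
  rw [lam]
  have := invL_leaf hℓ h1 h2
  rw [IsLeaf] at this
  rw [this]
  simp

lemma hlab_leaf {j : ℕ} (h1 : 1 ≤ j) (h2 : j ≤ n) : T.hlab ℓ j = 0 :=
  height_leaf T (invL_leaf hℓ h1 h2)

lemma lam_mem_facts {j : ℕ} (h1 : 1 ≤ j) (h2 : j ≤ T.numNodes) {i : ℕ}
    (hi : i ∈ T.lam ℓ j) : 1 ≤ i ∧ i ≤ T.numNodes ∧ i < j := by
  obtain ⟨w, hw, rfl⟩ := Finset.mem_image.1 hi
  have hb := buo_mem hℓ w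
  have hlt := buo_child_lt hℓ hw
  rw [label_invL hℓ h1 h2] at hlt
  exact ⟨hb.1, hb.2, hlt⟩

lemma lam_nonempty {j : ℕ} (h1 : n < j) (h2 : j ≤ T.numNodes) : (T.lam ℓ j).Nonempty :=
  (children_nonempty T (invL_internal hℓ h1 h2)).image _

lemma lam_inj {j j' : ℕ} (h1 : 1 ≤ j) (h2 : j ≤ T.numNodes) (h1' : 1 ≤ j')
    (h2' : j' ≤ T.numNodes) (hne : (T.lam ℓ j).Nonempty) (heq : T.lam ℓ j = T.lam ℓ j') :
    j = j' := by
  obtain ⟨x, hx⟩ := hne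
  obtain ⟨w, hw, hwx⟩ := Finset.mem_image.1 hx
  have hx' : x ∈ T.lam ℓ j' := heq ▸ hx
  obtain ⟨w', hw', hwx'⟩ := Finset.mem_image.1 hx'
  have hww : w = w' := buo_inj hℓ (hwx.trans hwx'.symm)
  subst hww
  have hnodes : T.invL ℓ j = T.invL ℓ j' := by
    by_contra hc
    exact Finset.disjoint_left.1 (children_disjoint T hc) hw hw'
  rw [← label_invL hℓ h1 h2, ← label_invL hℓ h1' h2', hnodes]

lemma lam_image_hlab {u : Fin T.numNodes} :
    ((T.children u).image ℓ).image (T.hlab ℓ) = (T.children u).image T.height := by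
  rw [Finset.image_image]
  apply Finset.image_congr
  intro w _
  show T.hlab ℓ (ℓ w) = T.height w
  rw [hlab, invL_label hℓ]

lemma lam_of_label (u : Fin T.numNodes) : T.lam ℓ (ℓ u) = (T.children u).image ℓ := by
  rw [lam, invL_label hℓ]

lemma key_eq {u : Fin T.numNodes} (hu : u ∈ T.internals) :
    (T.height u, T.minChildLabel ℓ u) = skey (T.hlab ℓ) ((T.children u).image ℓ) := by
  unfold skey
  have hne : ((T.children u).image T.height).Nonempty := (children_nonempty T hu).image _
  refine Prod.ext ?_ ?_
  · show T.height u = 1 + sSup _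
    rw [lam_image_hlab hℓ, Finset.Nonempty.csSup_eq_max' hne]
    exact height_eq_one_add_max T hu
  · show T.minChildLabel ℓ u = sInf _
    rw [minChildLabel, Finset.coe_image]

lemma card_matchRep : (T.matchRep ℓ).card = T.internals.card := by
  rw [matchRep]
  apply Finset.card_image_of_injOn
  intro u hu v hv huv
  by_contra hne
  have huv' : (T.children u).image ℓ = (T.children v).image ℓ := huv
  obtain ⟨w, hw⟩ := children_nonempty T (Finset.mem_coe.1 hu)
  have h1 : ℓ w ∈ (T.children u).image ℓ := Finset.mem_image_of_mem _ hw
  have h2 : ℓ w ∈ (T.children v).image ℓ := huv' ▸ h1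
  exact Finset.disjoint_left.1 (childLabels_disjoint hℓ hne) h1 h2

end BUO

lemma numNodes_eq_of_matchRep_eq {T₁ T₂ : PhyloTree n} {ℓ₁ : Fin T₁.numNodes → ℕ}
    {ℓ₂ : Fin T₂.numNodes → ℕ} (h₁ : T₁.IsBUO ℓ₁) (h₂ : T₂.IsBUO ℓ₂)
    (hR : T₁.matchRep ℓ₁ = T₂.matchRep ℓ₂) : T₁.numNodes = T₂.numNodes := by
  have e1 := card_matchRep (T := T₁) (ℓ := ℓ₁) h₁
  have e2 := card_matchRep (T := T₂) (ℓ := ℓ₂) h₂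
  have e3 := internals_card_add (T := T₁)
  have e4 := internals_card_add (T := T₂)
  rw [hR] at e1
  omega

theorem lam_hlab_agree {T₁ T₂ : PhyloTree n} {ℓ₁ : Fin T₁.numNodes → ℕ}
    {ℓ₂ : Fin T₂.numNodes → ℕ} (h₁ : T₁.IsBUO ℓ₁) (h₂ : T₂.IsBUO ℓ₂)
    (hR : T₁.matchRep ℓ₁ = T₂.matchRep ℓ₂) (hN : T₁.numNodes = T₂.numNodes) :
    ∀ j, 1 ≤ j → j ≤ T₁.numNodes →
      T₁.lam ℓ₁ j = T₂.lam ℓ₂ j ∧ T₁.hlab ℓ₁ j = T₂.hlab ℓ₂ j := by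
  intro j
  induction j using Nat.strong_induction_on with
  | _ j ih =>
    intro hj1 hjN
    have hjN₂ : j ≤ T₂.numNodes := hN ▸ hjN
    by_cases hjn : j ≤ n
    · exact ⟨(lam_leaf h₁ hj1 hjn).trans (lam_leaf h₂ hj1 hjn).symm,
        (hlab_leaf h₁ hj1 hjn).trans (hlab_leaf h₂ hj1 hjn).symm⟩
    · push_neg at hjn
      have hu₁ : T₁.invL ℓ₁ j ∈ T₁.internals := invL_internal h₁ hjn hjN
      have hu₂ : T₂.invL ℓ₂ j ∈ T₂.internals := invL_internal h₂ hjn hjN₂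
      have hSne : (T₁.lam ℓ₁ j).Nonempty := lam_nonempty h₁ hjn hjN
      have hS'ne : (T₂.lam ℓ₂ j).Nonempty := lam_nonempty h₂ hjn hjN₂
      have hl₁ : ℓ₁ (T₁.invL ℓ₁ j) = j := label_invL h₁ hj1 hjN
      have hl₂ : ℓ₂ (T₂.invL ℓ₂ j) = j := label_invL h₂ hj1 hjN₂
      have himg : ∀ S : Finset ℕ, (∀ i ∈ S, 1 ≤ i ∧ i ≤ T₁.numNodes ∧ i < j) →
          S.image (T₁.hlab ℓ₁) = S.image (T₂.hlab ℓ₂) := by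
        intro S hS
        apply Finset.image_congr
        intro i hi
        exact (ih i (hS i hi).2.2 (hS i hi).1 (hS i hi).2.1).2
      have hfacts₁ : ∀ i ∈ T₁.lam ℓ₁ j, 1 ≤ i ∧ i ≤ T₁.numNodes ∧ i < j :=
        fun i hi => lam_mem_facts h₁ hj1 hjN hi
      have hfacts₂ : ∀ i ∈ T₂.lam ℓ₂ j, 1 ≤ i ∧ i ≤ T₁.numNodes ∧ i < j := by
        intro i hi
        have := lam_mem_facts h₂ hj1 hjN₂ hi
        omega
      have hAimg : (T₁.lam ℓ₁ j).image (T₁.hlab ℓ₁) = (T₁.lam ℓ₁ j).image (T₂.hlab ℓ₂) :=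
        himg _ hfacts₁
      have hBimg : (T₂.lam ℓ₂ j).image (T₁.hlab ℓ₁) = (T₂.lam ℓ₂ j).image (T₂.hlab ℓ₂) :=
        himg _ hfacts₂
      have hmain : T₁.lam ℓ₁ j = T₂.lam ℓ₂ j := by
        by_contra hne
        have hmem₁ : T₁.lam ℓ₁ j ∈ T₂.matchRep ℓ₂ := by
          rw [← hR]
          exact (mem_matchRep (T := T₁)).2 ⟨T₁.invL ℓ₁ j, hu₁, rfl⟩
        obtain ⟨u', hu', hS⟩ := (mem_matchRep (T := T₂)).1 hmem₁
        have hj' := buo_mem h₂ u'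
        have hlam' : T₂.lam ℓ₂ (ℓ₂ u') = T₁.lam ℓ₁ j := by
          rw [lam_of_label h₂]
          exact hS
        have hj'gt : j < ℓ₂ u' := by
          rcases lt_trichotomy (ℓ₂ u') j with h | h | h
          · exfalso
            have hIH := (ih (ℓ₂ u') h hj'.1 (by omega)).1
            have heq1 : T₁.lam ℓ₁ (ℓ₂ u') = T₁.lam ℓ₁ j := by rw [hIH, hlam']
            have := lam_inj h₁ hj'.1 (by omega) hj1 hjN
              (by rw [heq1]; exact hSne) heq1
            omega
          · exfalso
            exact hne (by rw [← hlam', h])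
          · exact h
        have hmem₂ : T₂.lam ℓ₂ j ∈ T₁.matchRep ℓ₁ := by
          rw [hR]
          exact (mem_matchRep (T := T₂)).2 ⟨T₂.invL ℓ₂ j, hu₂, rfl⟩
        obtain ⟨u'', hu'', hS'⟩ := (mem_matchRep (T := T₁)).1 hmem₂
        have hj'' := buo_mem h₁ u''
        have hlam'' : T₁.lam ℓ₁ (ℓ₁ u'') = T₂.lam ℓ₂ j := by
          rw [lam_of_label h₁]
          exact hS'
        have hj''gt : j < ℓ₁ u'' := by
          rcases lt_trichotomy (ℓ₁ u'') j with h | h | h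
          · exfalso
            have hIH := (ih (ℓ₁ u'') h hj''.1 hj''.2).1
            have heq2 : T₂.lam ℓ₂ (ℓ₁ u'') = T₂.lam ℓ₂ j := by rw [← hIH, hlam'']
            have := lam_inj h₂ hj''.1 (by omega) hj1 hjN₂
              (by rw [heq2]; exact hS'ne) heq2
            omega
          · exfalso
            exact hne (by rw [← hlam'', h])
          · exact h
        -- keys
        have hK1 : KeyLt (skey (T₁.hlab ℓ₁) (T₁.lam ℓ₁ j)) (skey (T₁.hlab ℓ₁) (T₂.lam ℓ₂ j)) := by
          have e1 := key_eq h₁ hu₁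
          have e2 := key_eq h₁ hu''
          rw [hS'] at e2
          have e1' : (T₁.height (T₁.invL ℓ₁ j), T₁.minChildLabel ℓ₁ (T₁.invL ℓ₁ j)) =
              skey (T₁.hlab ℓ₁) (T₁.lam ℓ₁ j) := e1
          rw [← e1', ← e2]
          exact buo_key_lt h₁ hu₁ hu'' (by omega)
        have hK2 : KeyLt (skey (T₂.hlab ℓ₂) (T₂.lam ℓ₂ j)) (skey (T₂.hlab ℓ₂) (T₁.lam ℓ₁ j)) := by
          have e1 := key_eq h₂ hu₂
          have e2 := key_eq h₂ hu'
          rw [hS] at e2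
          have e1' : (T₂.height (T₂.invL ℓ₂ j), T₂.minChildLabel ℓ₂ (T₂.invL ℓ₂ j)) =
              skey (T₂.hlab ℓ₂) (T₂.lam ℓ₂ j) := e1
          rw [← e1', ← e2]
          exact buo_key_lt h₂ hu₂ hu' (by omega)
        rw [skey_congr hAimg, skey_congr hBimg] at hK1
        exact keyLt_asymm hK1 hK2
      refine ⟨hmain, ?_⟩
      have e1 := congrArg Prod.fst (key_eq h₁ hu₁)
      have e2 := congrArg Prod.fst (key_eq h₂ hu₂)
      have e1' : T₁.hlab ℓ₁ j = (skey (T₁.hlab ℓ₁) (T₁.lam ℓ₁ j)).1 := e1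
      have e2' : T₂.hlab ℓ₂ j = (skey (T₂.hlab ℓ₂) (T₂.lam ℓ₂ j)).1 := e2
      rw [e1', e2', skey_congr hAimg, hmain]

end PhyloTree
namespace PhyloTree

variable {n : ℕ}

theorem iso_of_matchRep_eq {T₁ T₂ : PhyloTree n} {ℓ₁ : Fin T₁.numNodes → ℕ}
    {ℓ₂ : Fin T₂.numNodes → ℕ} (h₁ : T₁.IsBUO ℓ₁) (h₂ : T₂.IsBUO ℓ₂)
    (hR : T₁.matchRep ℓ₁ = T₂.matchRep ℓ₂) : PhyloIso T₁ T₂ := by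
  have hN : T₁.numNodes = T₂.numNodes := numNodes_eq_of_matchRep_eq h₁ h₂ hR
  have agree := lam_hlab_agree h₁ h₂ hR hN
  -- the bijection
  have hmem₁ : ∀ v : Fin T₁.numNodes, 1 ≤ ℓ₁ v ∧ ℓ₁ v ≤ T₂.numNodes := by
    intro v
    have := buo_mem h₁ v
    omega
  have hmem₂ : ∀ w : Fin T₂.numNodes, 1 ≤ ℓ₂ w ∧ ℓ₂ w ≤ T₁.numNodes := by
    intro w
    have := buo_mem h₂ w
    omega
  set eto : Fin T₁.numNodes → Fin T₂.numNodes := fun v => T₂.invL ℓ₂ (ℓ₁ v) with heto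
  set einv : Fin T₂.numNodes → Fin T₁.numNodes := fun w => T₁.invL ℓ₁ (ℓ₂ w) with heinv
  have hlabeto : ∀ v, ℓ₂ (eto v) = ℓ₁ v := by
    intro v
    exact label_invL h₂ (hmem₁ v).1 (hmem₁ v).2
  have hlabeinv : ∀ w, ℓ₁ (einv w) = ℓ₂ w := by
    intro w
    exact label_invL h₁ (hmem₂ w).1 (hmem₂ w).2
  have hleft : ∀ v, einv (eto v) = v := by
    intro v
    show T₁.invL ℓ₁ (ℓ₂ (eto v)) = v
    rw [hlabeto, invL_label h₁]
  have hright : ∀ w, eto (einv w) = w := by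
    intro w
    show T₂.invL ℓ₂ (ℓ₁ (einv w)) = w
    rw [hlabeinv, invL_label h₂]
  set e : Fin T₁.numNodes ≃ Fin T₂.numNodes :=
    ⟨eto, einv, hleft, hright⟩ with he
  have heapp : ∀ v, e v = T₂.invL ℓ₂ (ℓ₁ v) := fun v => rfl
  -- root
  have hroot : e T₁.root = T₂.root := by
    have hr2 : ℓ₂ T₂.root = ℓ₁ T₁.root := by rw [buo_root h₁, buo_root h₂, hN]
    rw [heapp, ← hr2, invL_label h₂]
  -- membership transfer through lam
  have hchild : ∀ v : Fin T₁.numNodes, v ≠ T₁.root →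
      e v ∈ T₂.children (T₂.invL ℓ₂ (ℓ₁ (T₁.parent v))) := by
    intro v hv
    have hpv : v ∈ T₁.children (T₁.parent v) := (mem_children T₁).2 ⟨rfl, hv⟩
    have hjb := buo_mem h₁ (T₁.parent v)
    have hmemlam : ℓ₁ v ∈ T₁.lam ℓ₁ (ℓ₁ (T₁.parent v)) := by
      rw [lam_of_label h₁]
      exact Finset.mem_image_of_mem _ hpv
    have hmemlam₂ : ℓ₁ v ∈ T₂.lam ℓ₂ (ℓ₁ (T₁.parent v)) := by
      rw [← (agree _ hjb.1 hjb.2).1]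
      exact hmemlam
    rw [lam] at hmemlam₂
    obtain ⟨w, hw, hwl⟩ := Finset.mem_image.1 hmemlam₂
    have : e v = w := by
      rw [heapp, ← hwl, invL_label h₂]
    rw [this]
    exact hw
  have hparent : ∀ v, e (T₁.parent v) = T₂.parent (e v) := by
    intro v
    rcases eq_or_ne v T₁.root with rfl | hv
    · rw [T₁.parent_root, hroot, T₂.parent_root]
    · have h3 := hchild v hv
      have h4 := ((mem_children T₂).1 h3).1
      rw [h4, heapp]
  -- leaf labels
  have hlabel : ∀ v, T₁.IsLeaf v → T₂.labelOf (e v) = T₁.labelOf v := by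
    intro v hv
    have hb := buo_leaf_mem h₁ hv
    have hlam1 : T₁.lam ℓ₁ (ℓ₁ v) = ∅ := by
      rw [lam_of_label h₁]
      rw [IsLeaf] at hv
      rw [hv]
      simp
    have hlam2 : T₂.lam ℓ₂ (ℓ₁ v) = ∅ := by
      rw [← (agree _ (buo_mem h₁ v).1 (buo_mem h₁ v).2).1]
      exact hlam1
    have hleaf₂ : T₂.IsLeaf (e v) := by
      rw [lam] at hlam2
      rw [IsLeaf]
      rw [heapp]
      exact Finset.image_eq_empty.1 hlam2
    have hlab_e : ℓ₂ (e v) = ℓ₁ v := hlabeto v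
    rw [← buo_leaf h₂ hleaf₂, hlab_e, buo_leaf h₁ hv]
  exact ⟨e, hroot, hparent, hlabel⟩

theorem iso_of_matchPerm_eq {T₁ T₂ : PhyloTree n} {ℓ₁ : Fin T₁.numNodes → ℕ}
    {ℓ₂ : Fin T₂.numNodes → ℕ} (h₁ : T₁.IsBUO ℓ₁) (h₂ : T₂.IsBUO ℓ₂)
    (hπ : T₁.matchPerm ℓ₁ = T₂.matchPerm ℓ₂) : PhyloIso T₁ T₂ :=
  iso_of_matchRep_eq h₁ h₂ (matchRep_eq_of_matchPerm_eq h₁ h₂ hπ)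

theorem matchPerm_eq_of_iso {T₁ T₂ : PhyloTree n} {ℓ₁ : Fin T₁.numNodes → ℕ}
    {ℓ₂ : Fin T₂.numNodes → ℕ} (h₁ : T₁.IsBUO ℓ₁) (h₂ : T₂.IsBUO ℓ₂)
    (hiso : PhyloIso T₁ T₂) : T₁.matchPerm ℓ₁ = T₂.matchPerm ℓ₂ := by
  obtain ⟨e, hroot, hparent, hlabel⟩ := hiso
  exact iso_matchPerm e hroot hparent hlabel h₂ h₁

end PhyloTree
namespace TDAux

lemma mem_swapWords_inv {σ : Equiv.Perm ℕ} {k : ℕ} (h : k ∈ SwapWords σ) :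
    k ∈ SwapWords σ⁻¹ := by
  obtain ⟨l, hl, hp, hlen⟩ := h
  refine ⟨(l.map (fun x => x⁻¹)).reverse, ?_, ?_, by simp [hlen]⟩
  · intro τ' hτ'
    simp only [List.mem_reverse, List.mem_map] at hτ'
    obtain ⟨τ'', hτ'', rfl⟩ := hτ'
    obtain ⟨u, v, huv, rfl⟩ := hl τ'' hτ''
    exact ⟨u, v, huv, by simp⟩
  · rw [← List.prod_inv_reverse, hp]

lemma mem_swapWords_mul {σ τ : Equiv.Perm ℕ} {k m : ℕ} (hσ : k ∈ SwapWords σ)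
    (hτ : m ∈ SwapWords τ) : k + m ∈ SwapWords (σ * τ) := by
  obtain ⟨l₁, h₁, p₁, len₁⟩ := hσ
  obtain ⟨l₂, h₂, p₂, len₂⟩ := hτ
  refine ⟨l₁ ++ l₂, ?_, by rw [List.prod_append, p₁, p₂], by simp [len₁, len₂]⟩
  intro τ' hτ'
  rcases List.mem_append.1 hτ' with h | h
  exacts [h₁ τ' h, h₂ τ' h]

end TDAux

/-- TD is a metric on the set of phylogenetic trees with n labeled leaves up to
label-preserving isomorphism (it vanishes exactly on isomorphic pairs, is symmetric,
and satisfies the triangle inequality), and takes values in {0, 1, …, n − 2}. -/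
theorem TD_is_metric {n : ℕ} (T₁ T₂ T₃ : PhyloTree n)
    (ℓ₁ : Fin T₁.numNodes → ℕ) (ℓ₂ : Fin T₂.numNodes → ℕ) (ℓ₃ : Fin T₃.numNodes → ℕ)
    (h₁ : T₁.IsBUO ℓ₁) (h₂ : T₂.IsBUO ℓ₂) (h₃ : T₃.IsBUO ℓ₃) :
    (TD T₁ T₂ ℓ₁ ℓ₂ = 0 ↔ PhyloIso T₁ T₂) ∧
    TD T₁ T₂ ℓ₁ ℓ₂ = TD T₂ T₁ ℓ₂ ℓ₁ ∧
    TD T₁ T₃ ℓ₁ ℓ₃ ≤ TD T₁ T₂ ℓ₁ ℓ₂ + TD T₂ T₃ ℓ₂ ℓ₃ ∧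
    TD T₁ T₂ ℓ₁ ℓ₂ ≤ n - 2 := by
  classical
  set π₁ := T₁.matchPerm ℓ₁ with hπ₁
  set π₂ := T₂.matchPerm ℓ₂ with hπ₂
  set π₃ := T₃.matchPerm ℓ₃ with hπ₃
  have hw₁ : (n - 1) ∈ TDAux.SwapWords π₁ := PhyloTree.matchPerm_swapWord h₁
  have hw₂ : (n - 1) ∈ TDAux.SwapWords π₂ := PhyloTree.matchPerm_swapWord h₂
  have hw₃ : (n - 1) ∈ TDAux.SwapWords π₃ := PhyloTree.matchPerm_swapWord h₃
  have hσ₁₂ : (n - 1) + (n - 1) ∈ TDAux.SwapWords (π₂⁻¹ * π₁) :=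
    TDAux.mem_swapWords_mul (TDAux.mem_swapWords_inv hw₂) hw₁
  have hσ₂₃ : (n - 1) + (n - 1) ∈ TDAux.SwapWords (π₃⁻¹ * π₂) :=
    TDAux.mem_swapWords_mul (TDAux.mem_swapWords_inv hw₃) hw₂
  have hσ₁₃ : (n - 1) + (n - 1) ∈ TDAux.SwapWords (π₃⁻¹ * π₁) :=
    TDAux.mem_swapWords_mul (TDAux.mem_swapWords_inv hw₃) hw₁
  have hne₁₂ : (TDAux.SwapWords (π₂⁻¹ * π₁)).Nonempty := ⟨_, hσ₁₂⟩
  have hne₂₃ : (TDAux.SwapWords (π₃⁻¹ * π₂)).Nonempty := ⟨_, hσ₂₃⟩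
  have hne₁₃ : (TDAux.SwapWords (π₃⁻¹ * π₁)).Nonempty := ⟨_, hσ₁₃⟩
  have heven : ∀ σ : Equiv.Perm ℕ, ((n - 1) + (n - 1)) ∈ TDAux.SwapWords σ →
      minSwaps σ % 2 = 0 := by
    intro σ hσ
    obtain ⟨l, hl, hp, hlen⟩ := hσ
    have := TDAux.minSwaps_parity hl hp
    rw [hlen] at this
    omega
  have hev₁₂ := heven _ hσ₁₂
  have hev₂₃ := heven _ hσ₂₃
  have hev₁₃ := heven _ hσ₁₃
  have hTD₁₂ : TD T₁ T₂ ℓ₁ ℓ₂ = minSwaps (π₂⁻¹ * π₁) / 2 := rfl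
  have hTD₂₁ : TD T₂ T₁ ℓ₂ ℓ₁ = minSwaps (π₁⁻¹ * π₂) / 2 := rfl
  have hTD₂₃ : TD T₂ T₃ ℓ₂ ℓ₃ = minSwaps (π₃⁻¹ * π₂) / 2 := rfl
  have hTD₁₃ : TD T₁ T₃ ℓ₁ ℓ₃ = minSwaps (π₃⁻¹ * π₁) / 2 := rfl
  refine ⟨?_, ?_, ?_, ?_⟩
  · -- TD = 0 iff iso
    constructor
    · intro h0
      rw [hTD₁₂] at h0
      have hlt : minSwaps (π₂⁻¹ * π₁) = 0 := by omega
      have : π₂⁻¹ * π₁ = 1 := (TDAux.minSwaps_eq_zero_iff hne₁₂).1 hlt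
      have hππ : π₁ = π₂ := (inv_mul_eq_one.1 this).symm
      exact PhyloTree.iso_of_matchPerm_eq h₁ h₂ hππ
    · intro hiso
      have hππ : π₁ = π₂ := PhyloTree.matchPerm_eq_of_iso h₁ h₂ hiso
      have h1 : π₂⁻¹ * π₁ = 1 := by rw [hππ, inv_mul_cancel]
      have := (TDAux.minSwaps_eq_zero_iff hne₁₂).2 h1
      rw [hTD₁₂, this]
  · -- symmetry
    rw [hTD₁₂, hTD₂₁]
    have h1 : π₁⁻¹ * π₂ = (π₂⁻¹ * π₁)⁻¹ := by
      rw [mul_inv_rev, inv_inv]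
    rw [h1, TDAux.minSwaps_inv]
  · -- triangle
    have hcomp : π₃⁻¹ * π₁ = (π₃⁻¹ * π₂) * (π₂⁻¹ * π₁) := by
      group
    have htri : minSwaps (π₃⁻¹ * π₁) ≤ minSwaps (π₃⁻¹ * π₂) + minSwaps (π₂⁻¹ * π₁) := by
      rw [hcomp]
      exact TDAux.minSwaps_triangle hne₂₃ hne₁₂
    rw [hTD₁₂, hTD₂₃, hTD₁₃]
    omega
  · -- bound
    rcases eq_or_ne (π₂⁻¹ * π₁) 1 with h1 | h1
    · have := (TDAux.minSwaps_eq_zero_iff hne₁₂).2 h1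
      rw [hTD₁₂, this]
      omega
    · have hnpos : 1 ≤ n := PhyloTree.n_pos h₁
      have hsupp : ∀ x : ℕ, (π₂⁻¹ * π₁) x ≠ x → x ∈ Finset.Icc 1 (2 * n - 2) := by
        intro x hx
        have hN₁ := PhyloTree.numNodes_le (T := T₁)
        have hN₂ := PhyloTree.numNodes_le (T := T₂)
        rcases eq_or_ne (π₁ x) x with he | he
        · have : π₂⁻¹ x ≠ x := by
            rw [Equiv.Perm.mul_apply, he] at hx
            exact hx
          have hπ₂x : π₂ x ≠ x := by
            intro hc
            apply this
            calc π₂⁻¹ x = π₂⁻¹ (π₂ x) := by rw [hc]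
            _ = x := by simp
          have := PhyloTree.moved_bounds h₂ hπ₂x
          rw [Finset.mem_Icc]
          omega
        · have := PhyloTree.moved_bounds h₁ he
          rw [Finset.mem_Icc]
          omega
      obtain ⟨l, hl, hp, hlen⟩ := TDAux.exists_swaps_of_support
        (Finset.Icc 1 (2 * n - 2)) (π₂⁻¹ * π₁) hsupp h1
      have hminle : minSwaps (π₂⁻¹ * π₁) ≤ l.length := TDAux.minSwaps_le hl hp
      have hcard : (Finset.Icc 1 (2 * n - 2)).card = 2 * n - 2 := by
        rw [Nat.card_Icc]
        omega
      rw [hcard] at hlen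
      rw [hTD₁₂]
      omega
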